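/- arXiv:0901.3840 — 12 statements merged into one kernel-verified Lean document; each statement's English description precedes it below -/
import Mathlib

section
/- For s > 0 and fixed φ ∈ (0, 2π), the function g(θ) = (1 - cos(φ - θ))^{-s/2} + (1 - cos θ)^{-s/2} is strictly decreasing on the interval (0, φ/2). -/
/-!
Write `F t = (1 - cos t) ^ p` with `p = -s/2 < 0`, so the function is `θ ↦ F (φ - θ) + F θ`.
Since `√(1 - cos t) = √2 sin (t/2)` is positive and strictly concave on `(0, 2π)` and
`y ↦ y ^ (2p)` is convex and strictly decreasing on `(0, ∞)`, `F` is strictly convex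
on `(0, 2π)`. For `θ₁ < θ₂ < φ/2` the pair `θ₂, φ - θ₂` lies strictly inside `(θ₁, φ - θ₁)`
and has the same sum, so strict convexity gives `F θ₂ + F (φ - θ₂) < F θ₁ + F (φ - θ₁)`.
-/

open Real Set

theorem convexOn_rpow_of_nonpos {q : ℝ} (hq : q ≤ 0) :
    ConvexOn ℝ (Ioi 0) fun x : ℝ => x ^ q := by
  refine ⟨convex_Ioi 0, fun x (hx : 0 < x) y (hy : 0 < y) a b ha hb hab => ?_⟩
  simp only [smul_eq_mul]
  calc (a * x + b * y) ^ q ≤ (x ^ a * y ^ b) ^ q :=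
        rpow_le_rpow_of_nonpos (by positivity)
          (geom_mean_le_arith_mean2_weighted ha hb hx.le hy.le hab) hq
    _ = (x ^ q) ^ a * (y ^ q) ^ b := by
        rw [mul_rpow (by positivity) (by positivity), ← rpow_mul hx.le, ← rpow_mul hx.le,
          ← rpow_mul hy.le, ← rpow_mul hy.le, mul_comm a, mul_comm b]
    _ ≤ a * x ^ q + b * y ^ q :=
        geom_mean_le_arith_mean2_weighted ha hb (by positivity) (by positivity) hab

namespace Real

theorem sqrt_one_sub_cos_eq {t : ℝ} (h₀ : 0 ≤ t) (h₂ : t ≤ 2 * π) :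
    √(1 - cos t) = √2 * sin (t / 2) := by
  rw [sin_half_eq_sqrt h₀ h₂, ← sqrt_mul zero_le_two]
  ring_nf

theorem strictConcaveOn_sqrt_one_sub_cos :
    StrictConcaveOn ℝ (Icc 0 (2 * π)) fun t => √(1 - cos t) := by
  refine ⟨convex_Icc 0 (2 * π), fun x hx y hy hxy a b ha hb hab => ?_⟩
  have hsin := strictConcaveOn_sin_Icc.2 (x := x / 2) (y := y / 2)
    ⟨by linarith [hx.1], by linarith [hx.2]⟩ ⟨by linarith [hy.1], by linarith [hy.2]⟩
    (by contrapose! hxy; linarith) ha hb hab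
  have hmem := (convex_Icc 0 (2 * π)) hx hy ha.le hb.le hab
  simp only [smul_eq_mul] at hsin hmem ⊢
  rw [sqrt_one_sub_cos_eq hx.1 hx.2, sqrt_one_sub_cos_eq hy.1 hy.2,
    sqrt_one_sub_cos_eq hmem.1 hmem.2,
    show (a * x + b * y) / 2 = a * (x / 2) + b * (y / 2) by ring]
  have h2 : 0 < √2 := by positivity
  nlinarith

theorem one_sub_cos_pos {t : ℝ} (h₀ : 0 < t) (h₂ : t < 2 * π) : 0 < 1 - cos t := by
  have := (cos_eq_one_iff_of_lt_of_lt (by linarith [pi_pos]) h₂).not.2 h₀.ne'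
  linarith [(cos_le_one t).lt_of_ne this]

theorem strictConvexOn_one_sub_cos_rpow {p : ℝ} (hp : p < 0) :
    StrictConvexOn ℝ (Ioo 0 (2 * π)) fun t => (1 - cos t) ^ p := by
  set k : ℝ → ℝ := fun t => √(1 - cos t)
  have hk : MapsTo k (Ioo 0 (2 * π)) (Ioi 0) := fun t ht =>
    sqrt_pos.2 (one_sub_cos_pos ht.1 ht.2)
  have hconv : ConvexOn ℝ (k '' Ioo 0 (2 * π)) fun y : ℝ => y ^ (2 * p) :=
    (convexOn_rpow_of_nonpos (by linarith)).subset hk.image_subset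
      (isPreconnected_Ioo.image k (by fun_prop)).convex
  have hanti : StrictAntiOn (fun y : ℝ => y ^ (2 * p)) (k '' Ioo 0 (2 * π)) :=
    (strictAntiOn_rpow_Ioi_of_exponent_neg (by linarith)).mono hk.image_subset
  have hk_concave : StrictConcaveOn ℝ (Ioo 0 (2 * π)) k :=
    strictConcaveOn_sqrt_one_sub_cos.subset Ioo_subset_Icc_self (convex_Ioo _ _)
  refine (hconv.comp_strictConcaveOn hk_concave hanti).congr fun t ht => ?_
  have := (one_sub_cos_pos ht.1 ht.2).le
  simp only [Function.comp, k, sqrt_eq_rpow, ← rpow_mul this]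
  ring_nf

end Real

theorem StrictConvexOn.add_lt_add_of_mem_Ioo {s : Set ℝ} {f : ℝ → ℝ} (hf : StrictConvexOn ℝ s f)
    {a b x y : ℝ} (ha : a ∈ s) (hb : b ∈ s) (hx : x ∈ Ioo a b) (hxy : x + y = a + b) :
    f x + f y < f a + f b := by
  have hab : 0 < b - a := by linarith [hx.1, hx.2]
  have chord : ∀ t ∈ Ioo a b, (b - a) * f t < (b - t) * f a + (t - a) * f b := by
    rintro t ⟨hat, htb⟩
    have key := hf.2 ha hb (hat.trans htb).ne (div_pos (sub_pos.2 htb) hab)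
      (div_pos (sub_pos.2 hat) hab) (by field_simp; ring)
    simp only [smul_eq_mul] at key
    rw [show (b - t) / (b - a) * a + (t - a) / (b - a) * b = t by field_simp; ring] at key
    calc (b - a) * f t < (b - a) * ((b - t) / (b - a) * f a + (t - a) / (b - a) * f b) :=
          mul_lt_mul_of_pos_left key hab
      _ = (b - t) * f a + (t - a) * f b := by field_simp
  have hy : y = a + b - x := by linarith
  subst hy
  have hcx := chord x hx
  have hcy := chord (a + b - x) ⟨by linarith [hx.2], by linarith [hx.1]⟩
  have : (b - a) * (f x + f (a + b - x)) < (b - a) * (f a + f b) := by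
    linear_combination hcx + hcy
  exact lt_of_mul_lt_mul_left this hab.le

/-- For `s > 0` and fixed `φ ∈ (0, 2π)`, the function
`g θ = (1 - cos (φ - θ))^(-s/2) + (1 - cos θ)^(-s/2)` is strictly decreasing on `(0, φ/2)`. -/
theorem greedy_two_point_potential_strictAntiOn (s φ : ℝ) (hs : 0 < s)
    (hφ : φ ∈ Set.Ioo (0 : ℝ) (2 * Real.pi)) :
    StrictAntiOn (fun θ : ℝ =>
      (1 - Real.cos (φ - θ)) ^ (-(s / 2)) + (1 - Real.cos θ) ^ (-(s / 2)))
      (Set.Ioo 0 (φ / 2)) := by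
  rintro θ₁ ⟨hθ₁, hθ₁φ⟩ θ₂ ⟨-, hθ₂φ⟩ h₁₂
  have hF := strictConvexOn_one_sub_cos_rpow (p := -(s / 2)) (by linarith)
  have := hF.add_lt_add_of_mem_Ioo (a := θ₁) (b := φ - θ₁) (y := φ - θ₂)
    ⟨hθ₁, by linarith [hφ.2]⟩ ⟨by linarith, by linarith [hφ.2]⟩ ⟨h₁₂, by linarith⟩ (by ring)
  simp only
  linarith
end

section
/- For β > 1, the function x ↦ sin(x)/(1 - cos x)^β is strictly decreasing on (0, 2π). -/
/-!
Since `sin x ^ 2 = (1 - cos x) * (1 + cos x)`, the derivative of `sin x / (1 - cos x) ^ β` simplifies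
to `((1 - β) * cos x - β) / (1 - cos x) ^ β`. Its numerator equals `cos x - β * (1 + cos x)`, which
is at most `(cos x - 1) / 2 < 0` as soon as `β ≥ 1/2`.
-/

open Real Set

namespace Real

theorem cos_lt_one_of_mem_Ioo {x : ℝ} (hx : x ∈ Ioo 0 (2 * π)) : cos x < 1 :=
  (cos_le_one x).lt_of_ne fun h =>
    hx.1.ne' ((cos_eq_one_iff_of_lt_of_lt (by linarith [hx.1, pi_pos]) hx.2).mp h)

theorem hasDerivAt_sin_div_one_sub_cos_rpow (β : ℝ) {x : ℝ} (hx : cos x < 1) :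
    HasDerivAt (fun x => sin x / (1 - cos x) ^ β) (((1 - β) * cos x - β) / (1 - cos x) ^ β) x := by
  have hu : 0 < 1 - cos x := sub_pos.mpr hx
  have hd : HasDerivAt (fun x => 1 - cos x) (sin x) x := by
    simpa using (hasDerivAt_cos x).const_sub 1
  refine ((hasDerivAt_sin x).div (hd.rpow_const (Or.inl hu.ne'))
    (rpow_pos_of_pos hu β).ne').congr_deriv ?_
  rw [rpow_sub_one hu.ne']
  field_simp
  linear_combination (-β) * sin_sq_add_cos_sq x

theorem strictAntiOn_sin_div_one_sub_cos_rpow {β : ℝ} (hβ : 1 / 2 ≤ β) :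
    StrictAntiOn (fun x => sin x / (1 - cos x) ^ β) (Ioo 0 (2 * π)) := by
  have hderiv x (hx : x ∈ Ioo 0 (2 * π)) :=
    hasDerivAt_sin_div_one_sub_cos_rpow β (cos_lt_one_of_mem_Ioo hx)
  refine strictAntiOn_of_hasDerivWithinAt_neg (convex_Ioo _ _)
    (fun x hx => (hderiv x hx).continuousAt.continuousWithinAt)
    (fun x hx => (hderiv x (interior_subset hx)).hasDerivWithinAt) fun x hx => ?_
  rw [interior_Ioo] at hx
  have hcos := cos_lt_one_of_mem_Ioo hx
  apply div_neg_of_neg_of_pos _ (rpow_pos_of_pos (sub_pos.mpr hcos) β)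
  nlinarith [neg_one_le_cos x]

end Real

/-- For `β > 1`, the function `x ↦ sin x / (1 - cos x)^β` is strictly decreasing on `(0, 2π)`. -/
theorem sin_div_one_sub_cos_rpow_strictAntiOn (β : ℝ) (hβ : 1 < β) :
    StrictAntiOn (fun x : ℝ => Real.sin x / (1 - Real.cos x) ^ β)
      (Set.Ioo 0 (2 * Real.pi)) :=
  Real.strictAntiOn_sin_div_one_sub_cos_rpow (by linarith)
end

section
/- Let f(s) = (1/2)(4/3)^{1+s} + (1/3)^{1+s}. Then f(s) < 1 for all s ∈ (0,1), f(1) = 1, and f(s) > 1 for all s > 1. -/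
/-!
Since `(1/2)(4/3)^(1+s) + (1/3)^(1+s) = (2/3)(4/3)^s + (1/3)(1/3)^s`, `f s` is the `s`-th moment
of a random variable taking the values `4/3` and `1/3` with probabilities `2/3` and `1/3`, whose
mean is `1`. Strict Jensen for `t ↦ t ^ s`, concave for `s < 1` and convex for `s > 1`, compares
this moment with `1 ^ s = 1`.
-/

open Set

section TwoPointJensen

variable {a b x y s : ℝ}

theorem two_point_rpow_moment_lt_one (ha : 0 < a) (hb : 0 < b) (hab : a + b = 1)
    (hx : 0 ≤ x) (hy : 0 ≤ y) (hxy : x ≠ y) (hmean : a * x + b * y = 1)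
    (hs₀ : 0 < s) (hs₁ : s < 1) : a * x ^ s + b * y ^ s < 1 := by
  have h := (Real.strictConcaveOn_rpow hs₀ hs₁).2 (mem_Ici.2 hx) (mem_Ici.2 hy) hxy ha hb hab
  simpa only [smul_eq_mul, hmean, Real.one_rpow] using h

theorem one_lt_two_point_rpow_moment (ha : 0 < a) (hb : 0 < b) (hab : a + b = 1)
    (hx : 0 ≤ x) (hy : 0 ≤ y) (hxy : x ≠ y) (hmean : a * x + b * y = 1)
    (hs : 1 < s) : 1 < a * x ^ s + b * y ^ s := by
  have h := (strictConvexOn_rpow hs).2 (mem_Ici.2 hx) (mem_Ici.2 hy) hxy ha hb hab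
  simpa only [smul_eq_mul, hmean, Real.one_rpow] using h

end TwoPointJensen

theorem f_ratio_eq_two_point_moment {s : ℝ} (hs : 1 + s ≠ 0) :
    (1 / 2) * ((4 / 3 : ℝ) ^ (1 + s)) + (1 / 3 : ℝ) ^ (1 + s)
      = (2 / 3) * (4 / 3 : ℝ) ^ s + (1 / 3) * (1 / 3 : ℝ) ^ s := by
  rw [Real.rpow_one_add' (by norm_num) hs, Real.rpow_one_add' (by norm_num) hs]
  ring

/-- For `f s = (1/2)(4/3)^(1+s) + (1/3)^(1+s)` one has `f s < 1` on `(0,1)`,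
`f 1 = 1`, and `f s > 1` for `s > 1`. -/
theorem f_ratio_trichotomy :
    (∀ s : ℝ, s ∈ Set.Ioo (0 : ℝ) 1 →
      (1 / 2) * ((4 / 3 : ℝ) ^ (1 + s)) + (1 / 3 : ℝ) ^ (1 + s) < 1) ∧
    ((1 / 2) * ((4 / 3 : ℝ) ^ ((1 : ℝ) + 1)) + (1 / 3 : ℝ) ^ ((1 : ℝ) + 1) = 1) ∧
    (∀ s : ℝ, 1 < s →
      1 < (1 / 2) * ((4 / 3 : ℝ) ^ (1 + s)) + (1 / 3 : ℝ) ^ (1 + s)) := by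
  refine ⟨fun s ⟨hs₀, hs₁⟩ => ?_, ?_, fun s hs => ?_⟩
  · rw [f_ratio_eq_two_point_moment (by linarith)]
    exact two_point_rpow_moment_lt_one (by norm_num) (by norm_num) (by norm_num)
      (by norm_num) (by norm_num) (by norm_num) (by norm_num) hs₀ hs₁
  · rw [f_ratio_eq_two_point_moment (by norm_num), Real.rpow_one, Real.rpow_one]
    norm_num
  · rw [f_ratio_eq_two_point_moment (by linarith)]
    exact one_lt_two_point_rpow_moment (by norm_num) (by norm_num) (by norm_num)
      (by norm_num) (by norm_num) (by norm_num) (by norm_num) hs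
end

section
/- Let S_{2^{n+2}} ⊂ S¹ be a set of 2^{n+2} equally spaced points on the unit circle and S_{2^n} ⊂ S_{2^{n+2}} a subset of 2^n equally spaced points. Then for s > 0, the Riesz s-energy of the difference set α = S_{2^{n+2}} \ S_{2^n} (which has 3·2^n points) satisfies E_s(α) = (1/2)·E_s(S_{2^{n+2}}) + E_s(S_{2^n}). -/
/-!
For `B ⊆ A`, splitting the double sum gives `E_s(A \ B) = E_s(A) - 2 ∑_{b ∈ B} U_A(b) + E_s(B)`,
where `U_A(x) = ∑_{y ∈ A, y ≠ x} |x - y|^{-s}`. Rotations by powers of a primitive root fix a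
regular polygon `P` and act transitively on its vertices, so `U_P` is a constant `u` on `P`.
Hence `E_s(P) = |P| u` and the middle term is `2 (|B| / |P|) E_s(P)`, which is `E_s(P) / 2`
when `|P| = 4 |B|`, whatever the shape of `B`.
-/

open Complex

open scoped Classical in
/-- The discrete Riesz `s`-energy of a finite configuration in the plane. -/
noncomputable def rieszEnergy (s : ℝ) (ω : Finset ℂ) : ℝ :=
  ∑ x ∈ ω, ∑ y ∈ ω, if x = y then 0 else ‖x - y‖ ^ (-s)

open Finset
open scoped Classical

noncomputable def rieszKernel (s : ℝ) (x y : ℂ) : ℝ :=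
  if x = y then 0 else ‖x - y‖ ^ (-s)

noncomputable def rieszPotential (s : ℝ) (A : Finset ℂ) (x : ℂ) : ℝ :=
  ∑ y ∈ A, rieszKernel s x y

section Energy

variable (s : ℝ)

lemma rieszKernel_comm (x y : ℂ) : rieszKernel s x y = rieszKernel s y x := by
  simp only [rieszKernel, eq_comm, norm_sub_rev]

lemma rieszKernel_isometry {f : ℂ → ℂ} (hf : Isometry f) (x y : ℂ) :
    rieszKernel s (f x) (f y) = rieszKernel s x y := by
  simp only [rieszKernel, hf.injective.eq_iff, ← dist_eq_norm, hf.dist_eq]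

lemma rieszEnergy_eq_sum_rieszPotential (A : Finset ℂ) :
    rieszEnergy s A = ∑ x ∈ A, rieszPotential s A x := rfl

lemma sum_rieszPotential_comm (A B : Finset ℂ) :
    ∑ x ∈ A, rieszPotential s B x = ∑ y ∈ B, rieszPotential s A y := by
  simp only [rieszPotential]
  rw [sum_comm]
  exact sum_congr rfl fun y _ => sum_congr rfl fun x _ => rieszKernel_comm s x y

lemma rieszPotential_sdiff_add {A B : Finset ℂ} (h : B ⊆ A) (x : ℂ) :
    rieszPotential s (A \ B) x + rieszPotential s B x = rieszPotential s A x :=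
  sum_sdiff h

lemma rieszEnergy_sdiff {A B : Finset ℂ} (h : B ⊆ A) :
    rieszEnergy s (A \ B) =
      rieszEnergy s A - 2 * ∑ b ∈ B, rieszPotential s A b + rieszEnergy s B := by
  have hA : rieszEnergy s A = rieszEnergy s (A \ B) + ∑ x ∈ A \ B, rieszPotential s B x +
      ∑ b ∈ B, rieszPotential s A b := by
    rw [rieszEnergy_eq_sum_rieszPotential, ← sum_sdiff h, rieszEnergy_eq_sum_rieszPotential,
      ← sum_add_distrib]
    simp only [rieszPotential_sdiff_add s h]
  have hB : ∑ b ∈ B, rieszPotential s A b =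
      ∑ x ∈ A \ B, rieszPotential s B x + rieszEnergy s B := by
    rw [sum_rieszPotential_comm, ← sum_sdiff h, rieszEnergy_eq_sum_rieszPotential]
  linarith

lemma rieszPotential_isometry {f : ℂ → ℂ} (hf : Isometry f) {A : Finset ℂ}
    (hA : A.image f = A) (x : ℂ) : rieszPotential s A (f x) = rieszPotential s A x := by
  conv_lhs => rw [rieszPotential, ← hA, sum_image fun _ _ _ _ h => hf.injective h]
  exact sum_congr rfl fun y _ => rieszKernel_isometry s hf x y

end Energy

/-- A regular `N`-gon centred at `0` when `ζ` is a primitive `N`-th root of unity and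
`c ≠ 0`. -/
noncomputable def regularPolygon (c ζ : ℂ) (N : ℕ) : Finset ℂ :=
  (range N).image fun k => ζ ^ k * c

section RegularPolygon

variable {c ζ : ℂ} {N : ℕ}

lemma card_regularPolygon (hc : c ≠ 0) (hζ : IsPrimitiveRoot ζ N) :
    #(regularPolygon c ζ N) = N := by
  rw [regularPolygon, card_image_of_injOn (hζ.injOn_pow_mul hc), card_range]

lemma pow_mul_mem_regularPolygon (hζ : IsPrimitiveRoot ζ N) (hN : 0 < N) (k : ℕ) :
    ζ ^ k * c ∈ regularPolygon c ζ N :=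
  mem_image.2 ⟨k % N, mem_range.2 (Nat.mod_lt k hN), by rw [hζ.eq_orderOf, pow_mod_orderOf]⟩

lemma image_pow_mul_regularPolygon (hζ : IsPrimitiveRoot ζ N) (hN : 0 < N) (j : ℕ) :
    (regularPolygon c ζ N).image (ζ ^ j * ·) = regularPolygon c ζ N := by
  have hinj : Function.Injective (ζ ^ j * ·) :=
    mul_right_injective₀ (pow_ne_zero j (hζ.ne_zero hN.ne'))
  refine eq_of_subset_of_card_le ?_ (card_image_of_injective _ hinj).ge
  simp only [regularPolygon, image_image, image_subset_iff, Function.comp_apply, ← mul_assoc,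
    ← pow_add]
  exact fun k _ => pow_mul_mem_regularPolygon hζ hN (j + k)

/-- The rotation by a power of `ζ` carrying `c` to another vertex fixes the polygon. -/
lemma rieszPotential_regularPolygon (s : ℝ) (hζ : IsPrimitiveRoot ζ N) (hN : 0 < N)
    {a : ℂ} (ha : a ∈ regularPolygon c ζ N) :
    rieszPotential s (regularPolygon c ζ N) a = rieszPotential s (regularPolygon c ζ N) c := by
  obtain ⟨k, -, rfl⟩ := mem_image.1 ha
  have hrot : Isometry (ζ ^ k * ·) := Isometry.of_dist_eq fun x y => by
    rw [dist_eq_norm, dist_eq_norm, ← mul_sub, norm_mul, norm_pow, hζ.norm'_eq_one hN.ne',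
      one_pow, one_mul]
  exact rieszPotential_isometry s hrot (image_pow_mul_regularPolygon hζ hN k) c

lemma rieszEnergy_regularPolygon_sdiff (s : ℝ) (hc : c ≠ 0) (hζ : IsPrimitiveRoot ζ N)
    (hN : 0 < N) {B : Finset ℂ} (hB : B ⊆ regularPolygon c ζ N) :
    rieszEnergy s (regularPolygon c ζ N \ B) =
      (1 - 2 * #B / N) * rieszEnergy s (regularPolygon c ζ N) + rieszEnergy s B := by
  set u := rieszPotential s (regularPolygon c ζ N) c
  have hP : rieszEnergy s (regularPolygon c ζ N) = N * u := by
    rw [rieszEnergy_eq_sum_rieszPotential,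
      sum_congr rfl fun a ha => rieszPotential_regularPolygon s hζ hN ha, sum_const,
      card_regularPolygon hc hζ, nsmul_eq_mul]
  have hPB : ∑ b ∈ B, rieszPotential s (regularPolygon c ζ N) b = #B * u := by
    rw [sum_congr rfl fun b hb => rieszPotential_regularPolygon s hζ hN (hB hb), sum_const,
      nsmul_eq_mul]
  have hN' : (N : ℝ) ≠ 0 := by exact_mod_cast hN.ne'
  rw [rieszEnergy_sdiff s hB, hPB, hP]
  field_simp

lemma regularPolygon_pow_subset (hζ : IsPrimitiveRoot ζ N) (hN : 0 < N) (m r M : ℕ) :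
    regularPolygon (ζ ^ r * c) (ζ ^ m) M ⊆ regularPolygon c ζ N := by
  rw [regularPolygon, image_subset_iff]
  intro k _
  rw [← mul_assoc, ← pow_mul, ← pow_add]
  exact pow_mul_mem_regularPolygon hζ hN _

end RegularPolygon

/-- In `riesz_energy_greedy_difference` the index `k` is complex: `range N` is lifted to
`Finset ℂ` through the `Finset` monad. -/
lemma image_coe_range (f : ℂ → ℂ) (N : ℕ) :
    (↑(range N) : Finset ℂ).image f = (range N).image fun k : ℕ => f k := by
  ext; simp

lemma exp_angle_eq_pow_mul (θ : ℝ) (N k : ℕ) :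
    cexp ((θ + 2 * Real.pi * k / N) * I) = cexp (2 * Real.pi * I / N) ^ k * cexp (θ * I) := by
  rw [← exp_nat_mul, ← exp_add]
  ring_nf

theorem riesz_energy_greedy_difference_general (s : ℝ) (n : ℕ) (θ : ℝ) (r : ℕ) :
    rieszEnergy s
        ((Finset.range (2 ^ (n + 2))).image
            (fun k => Complex.exp ((θ + 2 * Real.pi * k / (2 ^ (n + 2) : ℕ)) * Complex.I)) \
          (Finset.range (2 ^ n)).image
            (fun k => Complex.exp
              ((θ + 2 * Real.pi * (4 * k + r) / (2 ^ (n + 2) : ℕ)) * Complex.I))) =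
      (1 / 2) * rieszEnergy s
          ((Finset.range (2 ^ (n + 2))).image
            (fun k => Complex.exp ((θ + 2 * Real.pi * k / (2 ^ (n + 2) : ℕ)) * Complex.I))) +
        rieszEnergy s
          ((Finset.range (2 ^ n)).image
            (fun k => Complex.exp
              ((θ + 2 * Real.pi * (4 * k + r) / (2 ^ (n + 2) : ℕ)) * Complex.I))) := by
  set ζ := cexp (2 * Real.pi * I / (2 ^ (n + 2) : ℕ))
  set c := cexp (θ * I)
  have hζ : IsPrimitiveRoot ζ (2 ^ (n + 2)) := isPrimitiveRoot_exp _ (by positivity)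
  have hB (k : ℕ) : cexp ((θ + 2 * Real.pi * (4 * k + r) / (2 ^ (n + 2) : ℕ)) * I) =
      (ζ ^ 4) ^ k * (ζ ^ r * c) := by
    rw [← mul_assoc, ← pow_mul, ← pow_add, ← exp_angle_eq_pow_mul]
    push_cast
    ring_nf
  simp only [image_coe_range, exp_angle_eq_pow_mul, hB, ← regularPolygon.eq_1]
  have hN : 0 < 2 ^ (n + 2) := by positivity
  have hcard : #(regularPolygon (ζ ^ r * c) (ζ ^ 4) (2 ^ n)) = 2 ^ n :=
    card_regularPolygon (mul_ne_zero (pow_ne_zero r (hζ.ne_zero hN.ne')) (exp_ne_zero _))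
      (hζ.pow hN (by ring))
  rw [rieszEnergy_regularPolygon_sdiff s (exp_ne_zero _) hζ hN
    (regularPolygon_pow_subset hζ hN 4 r _), hcard]
  congr 2
  push_cast
  field_simp
  ring

open scoped Classical in
/-- If `S_{2^{n+2}}` consists of `2^(n+2)` equally spaced points on the unit circle and
`S_{2^n} ⊆ S_{2^{n+2}}` consists of `2^n` equally spaced points, then for `s > 0` the
Riesz `s`-energy of the difference set `α = S_{2^{n+2}} \ S_{2^n}` (of `3·2^n` points)
satisfies `E_s(α) = (1/2)·E_s(S_{2^{n+2}}) + E_s(S_{2^n})`. -/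
theorem riesz_energy_greedy_difference (s : ℝ) (hs : 0 < s) (n : ℕ) (θ : ℝ) (r : ℕ)
    (hr : r < 4) :
    rieszEnergy s
        ((Finset.range (2 ^ (n + 2))).image
            (fun k => Complex.exp ((θ + 2 * Real.pi * k / (2 ^ (n + 2) : ℕ)) * Complex.I)) \
          (Finset.range (2 ^ n)).image
            (fun k => Complex.exp
              ((θ + 2 * Real.pi * (4 * k + r) / (2 ^ (n + 2) : ℕ)) * Complex.I))) =
      (1 / 2) * rieszEnergy s
          ((Finset.range (2 ^ (n + 2))).image
            (fun k => Complex.exp ((θ + 2 * Real.pi * k / (2 ^ (n + 2) : ℕ)) * Complex.I))) +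
        rieszEnergy s
          ((Finset.range (2 ^ n)).image
            (fun k => Complex.exp
              ((θ + 2 * Real.pi * (4 * k + r) / (2 ^ (n + 2) : ℕ)) * Complex.I))) :=
  riesz_energy_greedy_difference_general s n θ r
end

section
/- For any symmetric kernel k on a compact set A with finite Wiener energy w(A), and any equilibrium measure μ, if (a_n) is a greedy (k,μ)-energy sequence then for all N ≥ 2 the discrete energy satisfies E(α_N) = Σ_{i≠j≤N} k(a_i, a_j) ≤ N(N-1)·w(A). -/
open MeasureTheory

/-! Integrating the greedy inequality `∑_{i<n} k(aₙ, aᵢ) ≤ ∑_{i<n} k(x, aᵢ)` over `x ∼ μ`, which is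
legitimate because `S*_μ` has full `μ`-measure, bounds the left side by
`∑_{i<n} U^μ(aᵢ) ≤ n·w(A)`. Adding these bounds for `n < N` gives the energy estimate,
since each unordered pair `{aᵢ, aⱼ}` is counted twice in `E(α_N)`. -/

section Integral

variable {α : Type*} [MeasurableSpace α] {μ : Measure α} [IsProbabilityMeasure μ]

theorem ae_of_forall_mem_of_measure_eq_one {p : α → Prop} {s : Set α}
    (hp : NullMeasurableSet {x | p x} μ) (hs : μ s = 1) (hsp : ∀ x ∈ s, p x) :
    ∀ᵐ x ∂μ, p x := by
  refine (ae_iff_measure_eq hp).2 (le_antisymm (measure_mono (Set.subset_univ _)) ?_)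
  rw [measure_univ, ← hs]
  exact measure_mono hsp

theorem le_integral_of_forall_mem_of_measure_eq_one {f : α → ℝ} {s : Set α} {c : ℝ}
    (hf : Integrable f μ) (hs : μ s = 1) (hfs : ∀ x ∈ s, c ≤ f x) :
    c ≤ ∫ x, f x ∂μ := by
  have hae : ∀ᵐ x ∂μ, c ≤ f x :=
    ae_of_forall_mem_of_measure_eq_one
      (nullMeasurableSet_le aemeasurable_const hf.aemeasurable) hs hfs
  simpa using integral_mono_ae (integrable_const c) hf hae

end Integral

section Energy

variable {X : Type*} {k : X → X → ℝ}

theorem sum_kernel_le_card_mul_of_minimizing_on_measure_eq_one [MeasurableSpace X] {μ : Measure X}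
    [IsProbabilityMeasure μ] (hsym : ∀ x y, k x y = k y x) {ι : Type*} (t : Finset ι)
    (b : ι → X) {w : ℝ} (hpot : ∀ i ∈ t, ∫ y, k (b i) y ∂μ ≤ w)
    (hint : ∀ i ∈ t, Integrable (fun x => k x (b i)) μ) {S : Set X} (hS : μ S = 1) {z : X}
    (hz : ∀ x ∈ S, ∑ i ∈ t, k z (b i) ≤ ∑ i ∈ t, k x (b i)) :
    ∑ i ∈ t, k z (b i) ≤ t.card * w :=
  calc ∑ i ∈ t, k z (b i)
      ≤ ∫ x, ∑ i ∈ t, k x (b i) ∂μ :=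
        le_integral_of_forall_mem_of_measure_eq_one (integrable_finsetSum _ hint) hS hz
    _ = ∑ i ∈ t, ∫ y, k (b i) y ∂μ := by
        rw [integral_finsetSum _ hint]
        simp only [hsym _ (b _)]
    _ ≤ ∑ _i ∈ t, w := Finset.sum_le_sum hpot
    _ = t.card * w := by rw [Finset.sum_const, nsmul_eq_mul]

def discreteEnergy (k : X → X → ℝ) (a : ℕ → X) (N : ℕ) : ℝ :=
  ∑ i ∈ Finset.range N, ∑ j ∈ Finset.range N, if i = j then 0 else k (a i) (a j)

theorem discreteEnergy_succ (hsym : ∀ x y, k x y = k y x) (a : ℕ → X) (n : ℕ) :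
    discreteEnergy k a (n + 1) =
      discreteEnergy k a n + 2 * ∑ i ∈ Finset.range n, k (a n) (a i) := by
  have hrow : ∀ i ∈ Finset.range n, (if i = n then 0 else k (a i) (a n)) = k (a n) (a i) :=
    fun i hi => by rw [if_neg (Finset.mem_range.mp hi).ne, hsym]
  have hcol : ∀ j ∈ Finset.range n, (if n = j then 0 else k (a n) (a j)) = k (a n) (a j) :=
    fun j hj => if_neg (Finset.mem_range.mp hj).ne'
  simp only [discreteEnergy, Finset.sum_range_succ, Finset.sum_add_distrib, if_true, add_zero,
    Finset.sum_congr rfl hrow, Finset.sum_congr rfl hcol]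
  ring

theorem discreteEnergy_le_of_forall_sum_le (hsym : ∀ x y, k x y = k y x) {a : ℕ → X} {w : ℝ}
    (h : ∀ n, ∑ i ∈ Finset.range n, k (a n) (a i) ≤ n * w) (N : ℕ) :
    discreteEnergy k a N ≤ N * (N - 1) * w := by
  induction N with
  | zero => simp [discreteEnergy]
  | succ n ih =>
    rw [discreteEnergy_succ hsym]
    push_cast
    linarith [h n]

end Energy

theorem greedy_energy_le_wiener_general
    {X : Type*} [MeasurableSpace X] (A : Set X)
    (k : X → X → ℝ) (hsym : ∀ x y, k x y = k y x)
    (μ : Measure X) [IsProbabilityMeasure μ]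
    (wA : ℝ)
    (hFuglede : μ {x ∈ A | ∫ y, k x y ∂μ ≤ wA} = 1)
    (a : ℕ → X)
    (ha : ∀ n, a n ∈ {x ∈ A | ∫ y, k x y ∂μ ≤ wA})
    (hgreedy : ∀ n, ∀ x ∈ {x ∈ A | ∫ y, k x y ∂μ ≤ wA},
      ∑ i ∈ Finset.range n, k (a n) (a i) ≤ ∑ i ∈ Finset.range n, k x (a i))
    (hint : ∀ i, Integrable (fun x => k x (a i)) μ)
    (N : ℕ) :
    ∑ i ∈ Finset.range N, ∑ j ∈ Finset.range N, (if i = j then 0 else k (a i) (a j)) ≤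
      (N : ℝ) * ((N : ℝ) - 1) * wA := by
  have hstep (n : ℕ) : ∑ i ∈ Finset.range n, k (a n) (a i) ≤ n * wA := by
    simpa using sum_kernel_le_card_mul_of_minimizing_on_measure_eq_one hsym (Finset.range n) a
      (fun i _ => (ha i).2) (fun i _ => hint i) hFuglede (hgreedy n)
  exact discreteEnergy_le_of_forall_sum_le hsym hstep N

/-- For a symmetric lower semicontinuous kernel `k` on a compact set `A` in a locally
compact Hausdorff space, with finite Wiener energy `w(A)` attained by an equilibrium
measure `μ`, any greedy `(k,μ)`-energy sequence `a` (points chosen in the essential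
support `S*_μ = {x ∈ A : U^μ(x) ≤ w(A)}`, each minimizing the discrete potential there)
satisfies `E(α_N) = ∑_{i≠j<N} k(a_i,a_j) ≤ N(N-1)·w(A)` for all `N ≥ 2`. -/
theorem greedy_energy_le_wiener
    {X : Type*} [TopologicalSpace X] [LocallyCompactSpace X] [T2Space X]
    [MeasurableSpace X] [BorelSpace X]
    (A : Set X) (hA : IsCompact A)
    (k : X → X → ℝ) (hsym : ∀ x y, k x y = k y x)
    (hlsc : LowerSemicontinuous fun p : X × X => k p.1 p.2)
    (μ : Measure X) [IsProbabilityMeasure μ] (hμA : μ Aᶜ = 0)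
    (wA : ℝ)
    (heq : ∫ x, ∫ y, k x y ∂μ ∂μ = wA)
    (hmin : ∀ ν : Measure X, IsProbabilityMeasure ν → ν Aᶜ = 0 →
      wA ≤ ∫ x, ∫ y, k x y ∂ν ∂ν)
    (hFuglede : μ {x ∈ A | ∫ y, k x y ∂μ ≤ wA} = 1)
    (a : ℕ → X)
    (ha : ∀ n, a n ∈ {x ∈ A | ∫ y, k x y ∂μ ≤ wA})
    (hgreedy : ∀ n, ∀ x ∈ {x ∈ A | ∫ y, k x y ∂μ ≤ wA},
      ∑ i ∈ Finset.range n, k (a n) (a i) ≤ ∑ i ∈ Finset.range n, k x (a i))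
    (hint : ∀ i, Integrable (fun x => k x (a i)) μ)
    (N : ℕ) (hN : 2 ≤ N) :
    ∑ i ∈ Finset.range N, ∑ j ∈ Finset.range N, (if i = j then 0 else k (a i) (a j)) ≤
      (N : ℝ) * ((N : ℝ) - 1) * wA :=
  greedy_energy_le_wiener_general A k hsym μ wA hFuglede a ha hgreedy hint N
end

section
/- Define the sequence (a_n)_{n≥0} in [0,1] by a_0 = 1, a_1 = 0, a_2 = 1/2, and a_{2^n + i} = (2i - 1)/2^{n+1} for 1 ≤ i ≤ 2^n, n ≥ 1. Then the number of indices 0 ≤ k ≤ 3·2^{n-1} with a_k ∈ [0, 1/2] equals 2^n + 1, and consequently lim_{n→∞} card{k ≤ 3·2^{n-1} : a_k ∈ [0,1/2]}/(3·2^{n-1} + 1) = 2/3 ≠ 1/2. -/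
/-!
Block `m + 1` of the sequence, the indices `2^(m+1) < k ≤ 2^(m+2)`, lists the odd multiples of
`2^-(m+2)` in increasing order, so exactly its first half lies in `[0, 1/2]`. Counting block by
block, the indices `k ≤ 2^(m+1)` contribute `2^m + 1` points of `[0, 1/2]`, and the first half of
the next block, which ends at `3·2^m`, adds `2^m` more. The proportion `(2·2^m + 1)/(3·2^m + 1)`
then tends to `2/3`.
-/

open Filter Topology

theorem ncard_setOf_le_and_eq_count (p : ℕ → Prop) [DecidablePred p] (N : ℕ) :
    {k | k ≤ N ∧ p k}.ncard = Nat.count p (N + 1) := by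
  rw [Nat.count_eq_card_filter_range, ← Set.ncard_coe_finset]
  congr 1
  ext k
  simp

theorem odd_div_two_pow_mem_Icc_iff {n i : ℕ} (hi : 1 ≤ i) :
    (2 * (i : ℝ) - 1) / 2 ^ (n + 1) ∈ Set.Icc (0 : ℝ) (1 / 2) ↔ 2 * i ≤ 2 ^ n + 1 := by
  have hi' : (1 : ℝ) ≤ i := by exact_mod_cast hi
  have hnonneg : 0 ≤ (2 * (i : ℝ) - 1) / 2 ^ (n + 1) :=
    div_nonneg (by linarith) (by positivity)
  rw [Set.mem_Icc, and_iff_right hnonneg, div_le_iff₀ (by positivity), pow_succ,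
    ← Nat.cast_le (α := ℝ)]
  push_cast
  constructor <;> intro h <;> linarith

theorem tendsto_affine_div_affine_atTop (b c d e : ℝ) (hd : d ≠ 0) :
    Tendsto (fun x : ℝ => (b * x + c) / (d * x + e)) atTop (𝓝 (b / d)) := by
  have h : Tendsto (fun x : ℝ => (b + c * x⁻¹) / (d + e * x⁻¹)) atTop
      (𝓝 ((b + c * 0) / (d + e * 0))) :=
    (tendsto_const_nhds.add (tendsto_inv_atTop_zero.const_mul c)).div
      (tendsto_const_nhds.add (tendsto_inv_atTop_zero.const_mul e)) (by simpa using hd)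
  simp only [mul_zero, add_zero] at h
  refine h.congr' ?_
  filter_upwards [eventually_gt_atTop 0] with x hx
  field_simp

def HasDyadicBlocks (a : ℕ → ℝ) : Prop :=
  ∀ n : ℕ, 1 ≤ n → ∀ i : ℕ, 1 ≤ i → i ≤ 2 ^ n →
    a (2 ^ n + i) = (2 * (i : ℝ) - 1) / 2 ^ (n + 1)

namespace HasDyadicBlocks

variable {a : ℕ → ℝ}

theorem mem_Icc_iff (ha : HasDyadicBlocks a) {m i : ℕ} (hi : 1 ≤ i) (hi' : i ≤ 2 ^ (m + 1)) :
    a (2 ^ (m + 1) + i) ∈ Set.Icc (0 : ℝ) (1 / 2) ↔ i ≤ 2 ^ m := by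
  rw [ha (m + 1) (by omega) i hi hi', odd_div_two_pow_mem_Icc_iff hi, pow_succ]
  omega

theorem count_two_pow_add_one_add (ha : HasDyadicBlocks a) {m c i : ℕ}
    (hc : Nat.count (a · ∈ Set.Icc (0 : ℝ) (1 / 2)) (2 ^ (m + 1) + 1) = c)
    (hi : i ≤ 2 ^ (m + 1)) :
    Nat.count (a · ∈ Set.Icc (0 : ℝ) (1 / 2)) (2 ^ (m + 1) + 1 + i) = c + min i (2 ^ m) := by
  induction i with
  | zero => simpa using hc
  | succ i ih =>
    have hmem := ha.mem_Icc_iff (m := m) (i := i + 1) (by omega) hi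
    rw [show 2 ^ (m + 1) + (i + 1) = 2 ^ (m + 1) + 1 + i by ring] at hmem
    rw [← add_assoc, Nat.count_succ, ih (by omega)]
    split_ifs with h
    · have := hmem.1 h
      omega
    · have := mt hmem.2 h
      omega

theorem count_two_pow_add_one (ha : HasDyadicBlocks a) (h0 : a 0 = 1) (h1 : a 1 = 0)
    (h2 : a 2 = 1 / 2) (m : ℕ) :
    Nat.count (a · ∈ Set.Icc (0 : ℝ) (1 / 2)) (2 ^ (m + 1) + 1) = 2 ^ m + 1 := by
  induction m with
  | zero => norm_num [Nat.count_succ, h0, h1, h2]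
  | succ m ih =>
    rw [show 2 ^ (m + 1 + 1) + 1 = 2 ^ (m + 1) + 1 + 2 ^ (m + 1) by ring,
      ha.count_two_pow_add_one_add ih le_rfl, pow_succ]
    omega

theorem count_three_mul_two_pow_add_one (ha : HasDyadicBlocks a) (h0 : a 0 = 1)
    (h1 : a 1 = 0) (h2 : a 2 = 1 / 2) (m : ℕ) :
    Nat.count (a · ∈ Set.Icc (0 : ℝ) (1 / 2)) (3 * 2 ^ m + 1) = 2 ^ (m + 1) + 1 := by
  rw [show 3 * 2 ^ m + 1 = 2 ^ (m + 1) + 1 + 2 ^ m by ring,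
    ha.count_two_pow_add_one_add (ha.count_two_pow_add_one h0 h1 h2 m) (by rw [pow_succ]; omega),
    pow_succ]
  omega

end HasDyadicBlocks

/-- The greedy best-packing (Leja–Bos) sequence on `[0,1]` given by `a 0 = 1`, `a 1 = 0`,
`a 2 = 1/2`, `a (2^n + i) = (2i-1)/2^(n+1)` for `1 ≤ i ≤ 2^n`, `n ≥ 1`, has exactly
`2^n + 1` of its first `3·2^(n-1) + 1` points in `[0, 1/2]`; hence the proportion tends
to `2/3 ≠ 1/2`, so the sequence is not asymptotically uniformly distributed. -/
theorem leja_bos_not_uniform (a : ℕ → ℝ)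
    (h0 : a 0 = 1) (h1 : a 1 = 0) (h2 : a 2 = 1 / 2)
    (hrec : ∀ n : ℕ, 1 ≤ n → ∀ i : ℕ, 1 ≤ i → i ≤ 2 ^ n →
      a (2 ^ n + i) = (2 * (i : ℝ) - 1) / 2 ^ (n + 1)) :
    (∀ n : ℕ, 1 ≤ n →
      {k : ℕ | k ≤ 3 * 2 ^ (n - 1) ∧ a k ∈ Set.Icc (0 : ℝ) (1 / 2)}.ncard = 2 ^ n + 1) ∧
    Tendsto (fun n : ℕ =>
        (({k : ℕ | k ≤ 3 * 2 ^ (n - 1) ∧ a k ∈ Set.Icc (0 : ℝ) (1 / 2)}.ncard : ℝ)) /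
          (3 * 2 ^ (n - 1) + 1)) atTop (nhds (2 / 3)) ∧
    (2 / 3 : ℝ) ≠ 1 / 2 := by
  have ha : HasDyadicBlocks a := hrec
  have hcard : ∀ n : ℕ, 1 ≤ n →
      {k : ℕ | k ≤ 3 * 2 ^ (n - 1) ∧ a k ∈ Set.Icc (0 : ℝ) (1 / 2)}.ncard = 2 ^ n + 1 := by
    intro n hn
    obtain ⟨m, rfl⟩ := Nat.exists_eq_add_of_le' hn
    rw [ncard_setOf_le_and_eq_count, Nat.add_sub_cancel,
      ha.count_three_mul_two_pow_add_one h0 h1 h2]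
  refine ⟨hcard, ?_, by norm_num⟩
  have hlim := (tendsto_affine_div_affine_atTop 2 1 3 1 three_ne_zero).comp
    ((tendsto_pow_atTop_atTop_of_one_lt one_lt_two).comp (tendsto_sub_atTop_nat 1))
  refine hlim.congr' ?_
  filter_upwards [eventually_ge_atTop 1] with n hn
  obtain ⟨m, rfl⟩ := Nat.exists_eq_add_of_le' hn
  rw [hcard (m + 1) hn]
  simp only [Function.comp_apply, Nat.add_sub_cancel]
  push_cast
  ring
end

section
/- The sequence (a_n) in [0,1] defined by a_0 = 1, a_1 = 0, a_2 = 1/2, and a_{2^n + i} = (2i-1)/2^{n+1} for 1 ≤ i ≤ 2^n, n ≥ 1, is a greedy best-packing sequence: for every m ≥ 1, min_{0≤i≤m-1} |a_m - a_i| = max_{x∈[0,1]} min_{0≤i≤m-1} |x - a_i|. -/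
/-!
Write `m = 2 ^ n + i` with `1 ≤ i ≤ 2 ^ n`. The points `a 0, …, a (2 ^ n)` exhaust the grid
`k / 2 ^ n`, `0 ≤ k ≤ 2 ^ n`, so every `x ∈ [0,1]` lies within `1 / 2 ^ (n+1)` of an earlier
point. All earlier points are integer multiples of `1 / 2 ^ (n+1)` different from the odd
multiple `a m`, so `a m` is at distance at least `1 / 2 ^ (n+1)` from each of them and thus
realizes the covering radius of the earlier points.
-/

open Set

theorem iInf_dist_eq_iSup_iInf_dist_of_covering {α ι : Type*} [PseudoMetricSpace α]
    {K : Set α} {b : ι → α} {p : α} {d : ℝ} (hp : p ∈ K)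
    (hcover : ∀ x ∈ K, ∃ j, dist x (b j) ≤ d) (hsep : ∀ j, d ≤ dist p (b j)) :
    ⨅ j, dist p (b j) = ⨆ x : K, ⨅ j, dist (x : α) (b j) := by
  have hle : ∀ x ∈ K, ⨅ j, dist x (b j) ≤ d := fun x hx ↦ by
    obtain ⟨j, hj⟩ := hcover x hx
    exact (ciInf_le ⟨0, by rintro _ ⟨j, rfl⟩; exact dist_nonneg⟩ j).trans hj
  obtain ⟨j, -⟩ := hcover p hp
  have : Nonempty ι := ⟨j⟩
  have : Nonempty K := ⟨⟨p, hp⟩⟩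
  have hp_eq : ⨅ j, dist p (b j) = d := (hle p hp).antisymm (le_ciInf hsep)
  refine le_antisymm ?_ (ciSup_le fun x ↦ (hle x x.2).trans hp_eq.ge)
  exact le_ciSup (f := fun x : K ↦ ⨅ j, dist (x : α) (b j))
    ⟨d, by rintro _ ⟨x, rfl⟩; exact hle x x.2⟩ ⟨p, hp⟩

theorem exists_nat_le_abs_sub_div_le {x : ℝ} (hx : x ∈ Icc 0 1) {N : ℕ} (hN : 0 < N) :
    ∃ k ≤ N, |x - k / N| ≤ 1 / (2 * N) := by
  have hN' : (0 : ℝ) < N := by exact_mod_cast hN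
  have hNx : 0 ≤ N * x + 1 / 2 := by nlinarith [hx.1]
  refine ⟨⌊N * x + 1 / 2⌋₊, Nat.lt_succ_iff.1 ((Nat.floor_lt hNx).2 ?_), ?_⟩
  · push_cast; nlinarith [hx.2]
  · have hlo := Nat.floor_le hNx
    have hhi := Nat.lt_floor_add_one (N * x + 1 / 2)
    rw [show x - ⌊N * x + 1 / 2⌋₊ / N = (N * x - ⌊N * x + 1 / 2⌋₊) / N by field_simp,
      show (1 : ℝ) / (2 * N) = (1 / 2) / N by field_simp, abs_div, abs_of_pos hN']
    gcongr
    rw [abs_le]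
    constructor <;> linarith

theorem one_div_le_abs_intCast_div_sub {p q : ℤ} (h : p ≠ q) {c : ℝ} (hc : 0 < c) :
    1 / c ≤ |p / c - q / c| := by
  rw [← sub_div, abs_div, abs_of_pos hc]
  gcongr
  rw [← Int.cast_sub, ← Int.cast_abs]
  exact_mod_cast Int.one_le_abs (sub_ne_zero.2 h)

theorem Nat.exists_eq_two_pow_add {m : ℕ} (hm : 2 ≤ m) :
    ∃ n i, 1 ≤ i ∧ i ≤ 2 ^ n ∧ m = 2 ^ n + i := by
  have hlo : 2 ^ Nat.log 2 (m - 1) ≤ m - 1 := Nat.pow_log_le_self 2 (by omega)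
  have hhi : m - 1 < 2 ^ (Nat.log 2 (m - 1) + 1) := Nat.lt_pow_succ_log_self (by norm_num) _
  rw [pow_succ] at hhi
  exact ⟨Nat.log 2 (m - 1), m - 2 ^ Nat.log 2 (m - 1), by omega, by omega, by omega⟩

/-- `a 2 = 1 / 2` is the case `n = 0` of `two_pow_add`. -/
structure IsLejaBos (a : ℕ → ℝ) : Prop where
  zero : a 0 = 1
  one : a 1 = 0
  two_pow_add : ∀ n i : ℕ, 1 ≤ i → i ≤ 2 ^ n → a (2 ^ n + i) = (2 * i - 1) / 2 ^ (n + 1)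

namespace IsLejaBos

variable {a : ℕ → ℝ}

theorem of_apply_two (h0 : a 0 = 1) (h1 : a 1 = 0) (h2 : a 2 = 1 / 2)
    (hrec : ∀ n : ℕ, 1 ≤ n → ∀ i : ℕ, 1 ≤ i → i ≤ 2 ^ n →
      a (2 ^ n + i) = (2 * (i : ℝ) - 1) / 2 ^ (n + 1)) :
    IsLejaBos a where
  zero := h0
  one := h1
  two_pow_add
    | 0, i, hi1, hi2 => by
      obtain rfl : i = 1 := by omega
      norm_num [h2]
    | n + 1, i, hi1, hi2 => hrec (n + 1) n.succ_pos i hi1 hi2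

theorem exists_nat_eq_div_two_pow (ha : IsLejaBos a) (n : ℕ) :
    ∀ j ≤ 2 ^ n, ∃ k : ℕ, k ≤ 2 ^ n ∧ a j = k / 2 ^ n := by
  induction n with
  | zero =>
    intro j hj
    interval_cases j
    · exact ⟨1, le_rfl, by simp [ha.zero]⟩
    · exact ⟨0, Nat.zero_le _, by simp [ha.one]⟩
  | succ n ih =>
    intro j hj
    rw [pow_succ] at hj ⊢
    by_cases hjn : j ≤ 2 ^ n
    · obtain ⟨k, hk, hak⟩ := ih j hjn
      refine ⟨2 * k, by omega, ?_⟩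
      rw [hak, pow_succ]
      push_cast
      field_simp
    · obtain ⟨i, rfl⟩ : ∃ i, j = 2 ^ n + i := ⟨j - 2 ^ n, by omega⟩
      refine ⟨2 * i - 1, by omega, ?_⟩
      rw [ha.two_pow_add n i (by omega) (by omega), Nat.cast_sub (by omega), pow_succ]
      push_cast
      ring

theorem exists_apply_eq_div_two_pow (ha : IsLejaBos a) (n : ℕ) :
    ∀ k : ℕ, k ≤ 2 ^ n → ∃ j ≤ 2 ^ n, a j = k / 2 ^ n := by
  induction n with
  | zero =>
    intro k hk
    interval_cases k
    · exact ⟨1, le_rfl, by simp [ha.one]⟩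
    · exact ⟨0, Nat.zero_le _, by simp [ha.zero]⟩
  | succ n ih =>
    intro k hk
    rw [pow_succ] at hk
    obtain ⟨k, rfl | rfl⟩ := Nat.even_or_odd' k
    · obtain ⟨j, hj, haj⟩ := ih k (by omega)
      refine ⟨j, hj.trans (Nat.pow_le_pow_right two_pos n.le_succ), ?_⟩
      rw [haj, pow_succ]
      push_cast
      field_simp
    · refine ⟨2 ^ n + (k + 1), by rw [pow_succ]; omega, ?_⟩
      rw [ha.two_pow_add n (k + 1) (by omega) (by omega)]
      push_cast
      ring

theorem mem_Icc (ha : IsLejaBos a) (j : ℕ) : a j ∈ Icc 0 1 := by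
  obtain ⟨k, hk, hak⟩ := ha.exists_nat_eq_div_two_pow j j (Nat.lt_two_pow_self).le
  rw [hak]
  exact ⟨by positivity, div_le_one_of_le₀ (by exact_mod_cast hk) (by positivity)⟩

theorem exists_abs_sub_le (ha : IsLejaBos a) (n : ℕ) {x : ℝ} (hx : x ∈ Icc 0 1) :
    ∃ j ≤ 2 ^ n, |x - a j| ≤ 1 / 2 ^ (n + 1) := by
  obtain ⟨k, hk, hxk⟩ := exists_nat_le_abs_sub_div_le hx (Nat.two_pow_pos n)
  obtain ⟨j, hj, haj⟩ := ha.exists_apply_eq_div_two_pow n k hk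
  refine ⟨j, hj, ?_⟩
  rw [haj, pow_succ, mul_comm]
  exact_mod_cast hxk

theorem one_div_two_pow_le_abs_sub (ha : IsLejaBos a) {n i : ℕ} (hi1 : 1 ≤ i) (hi2 : i ≤ 2 ^ n)
    {j : ℕ} (hj : j < 2 ^ n + i) : 1 / 2 ^ (n + 1) ≤ |a (2 ^ n + i) - a j| := by
  suffices ∃ q : ℤ, q ≠ 2 * i - 1 ∧ a j = q / 2 ^ (n + 1) by
    obtain ⟨q, hq, haj⟩ := this
    rw [ha.two_pow_add n i hi1 hi2, haj]
    have := one_div_le_abs_intCast_div_sub hq.symm (c := 2 ^ (n + 1)) (by positivity)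
    push_cast at this
    exact this
  by_cases hjn : j ≤ 2 ^ n
  · obtain ⟨k, -, hak⟩ := ha.exists_nat_eq_div_two_pow n j hjn
    refine ⟨2 * k, by omega, ?_⟩
    rw [hak, pow_succ]
    push_cast
    field_simp
  · obtain ⟨i', rfl⟩ : ∃ i', j = 2 ^ n + i' := ⟨j - 2 ^ n, by omega⟩
    refine ⟨2 * i' - 1, by omega, ?_⟩
    rw [ha.two_pow_add n i' (by omega) (by omega)]
    push_cast
    ring

end IsLejaBos

/-- The sequence `a 0 = 1`, `a 1 = 0`, `a 2 = 1/2`,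
`a (2^n + i) = (2i-1)/2^(n+1)` for `1 ≤ i ≤ 2^n`, `n ≥ 1`, is a greedy best-packing
sequence on `[0,1]`: for every `m ≥ 1`, the minimal distance from `a m` to the
previously selected points equals the maximum over `x ∈ [0,1]` of the minimal distance
from `x` to those points. -/
theorem leja_bos_is_greedy_best_packing (a : ℕ → ℝ)
    (h0 : a 0 = 1) (h1 : a 1 = 0) (h2 : a 2 = 1 / 2)
    (hrec : ∀ n : ℕ, 1 ≤ n → ∀ i : ℕ, 1 ≤ i → i ≤ 2 ^ n →
      a (2 ^ n + i) = (2 * (i : ℝ) - 1) / 2 ^ (n + 1)) :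
    ∀ m : ℕ, 1 ≤ m →
      (⨅ i : Fin m, |a m - a i|) =
        ⨆ x : Set.Icc (0 : ℝ) 1, ⨅ i : Fin m, |(x : ℝ) - a i| := by
  have ha : IsLejaBos a := .of_apply_two h0 h1 h2 hrec
  intro m hm
  simp only [← Real.dist_eq]
  obtain rfl | hm := hm.eq_or_lt
  · refine iInf_dist_eq_iSup_iInf_dist_of_covering (d := 1) (ha.mem_Icc 1)
      (fun x hx ↦ ⟨0, ?_⟩) fun j ↦ ?_
    · rw [Real.dist_eq, Fin.val_zero, ha.zero, abs_le]
      constructor <;> linarith [hx.1, hx.2]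
    · rw [Subsingleton.elim j 0, Real.dist_eq, Fin.val_zero, ha.zero, ha.one]
      norm_num
  · obtain ⟨n, i, hi1, hi2, rfl⟩ := Nat.exists_eq_two_pow_add hm
    refine iInf_dist_eq_iSup_iInf_dist_of_covering (ha.mem_Icc _) (fun x hx ↦ ?_)
      fun j ↦ (ha.one_div_two_pow_le_abs_sub hi1 hi2 j.isLt).trans_eq (Real.dist_eq _ _).symm
    obtain ⟨j, hj, hxj⟩ := ha.exists_abs_sub_le n hx
    exact ⟨⟨j, by omega⟩, (Real.dist_eq _ _).trans_le hxj⟩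
end

section
/- Let L > 0 and c ∈ (0, L]. For p > 1, the function g(p) = (1 + 1/p)·(p(L - c) + c)/2 attains its minimum at p = √(c/(L-c)) (when c < L), with minimum value L/2 + √(c(L - c)). Moreover, if c > (2+√2)L/4, then L/2 + √(c(L-c)) < c. -/
/-!
Writing `a = L - c` and `b = c`, one has `g p = L/2 + (p a + b/p)/2`, and by AM-GM applied to
`p a` and `b / p`, whose product `a b` does not depend on `p`, the second term is at least
`√(a b)`, with equality when `p a = b / p`, i.e. `p = √(b/a)`. The last claim reduces to
`c (L - c) < (c - L/2)²`, a quadratic inequality in `c` whose larger root is `(2 + √2) L / 4`.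
-/

open Real

section AMGM

variable {a b p : ℝ}

lemma two_sqrt_mul_le_mul_add_div (ha : 0 ≤ a) (hb : 0 ≤ b) (hp : 0 < p) :
    2 * √(a * b) ≤ p * a + b / p := by
  have hpa : 0 ≤ p * a := mul_nonneg hp.le ha
  have hbp : 0 ≤ b / p := div_nonneg hb hp.le
  have hprod : √(p * a) * √(b / p) = √(a * b) := by
    rw [← sqrt_mul hpa]
    congr 1
    field_simp
  nlinarith [sq_nonneg (√(p * a) - √(b / p)), sq_sqrt hpa, sq_sqrt hbp]

lemma sqrt_div_mul_add_div_sqrt_div (ha : 0 < a) (hb : 0 < b) :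
    √(b / a) * a + b / √(b / a) = 2 * √(a * b) := by
  have hsa : 0 < √a := sqrt_pos.mpr ha
  have hsb : 0 < √b := sqrt_pos.mpr hb
  rw [sqrt_div' b ha.le, sqrt_mul ha.le]
  field_simp
  rw [sq_sqrt ha.le, sq_sqrt hb.le]
  ring

lemma one_add_one_div_mul_div_two (hp : p ≠ 0) :
    (1 + 1 / p) * (p * a + b) / 2 = (a + b) / 2 + (p * a + b / p) / 2 := by
  field_simp
  ring

end AMGM

lemma half_add_sqrt_mul_sub_lt {L c : ℝ} (hL : 0 ≤ L) (hc : (2 + √2) * L / 4 < c) :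
    L / 2 + √(c * (L - c)) < c := by
  have h2 : √2 ^ 2 = 2 := sq_sqrt zero_le_two
  have hhalf : L / 2 < c := by nlinarith [sqrt_nonneg 2]
  suffices √(c * (L - c)) < c - L / 2 by linarith
  rw [sqrt_lt' (by linarith)]
  -- `(c - L/2)² - c (L - c) = 2 (c - (2 + √2) L / 4) (c - (2 - √2) L / 4)`
  nlinarith [mul_pos (sub_pos.mpr hc)
    (show 0 < c - (2 - √2) * L / 4 by nlinarith [sqrt_nonneg 2])]

theorem best_packing_g_min_general (L c : ℝ) (hc : c ∈ Set.Ioc (0 : ℝ) L) :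
    (∀ p : ℝ, 1 < p →
      L / 2 + Real.sqrt (c * (L - c)) ≤ (1 + 1 / p) * (p * (L - c) + c) / 2) ∧
    (c < L →
      (1 + 1 / Real.sqrt (c / (L - c))) * (Real.sqrt (c / (L - c)) * (L - c) + c) / 2 =
        L / 2 + Real.sqrt (c * (L - c))) ∧
    ((2 + Real.sqrt 2) * L / 4 < c → L / 2 + Real.sqrt (c * (L - c)) < c) := by
  obtain ⟨hc0, hcL⟩ := hc
  have hsum : (L - c + c) / 2 = L / 2 := by ring
  refine ⟨fun p hp => ?_, fun hlt => ?_, half_add_sqrt_mul_sub_lt (by linarith)⟩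
  · have hp0 : 0 < p := zero_lt_one.trans hp
    rw [one_add_one_div_mul_div_two hp0.ne', hsum, mul_comm c]
    linarith [two_sqrt_mul_le_mul_add_div (sub_nonneg.mpr hcL) hc0.le hp0]
  · have hLc : 0 < L - c := sub_pos.mpr hlt
    have hq : √(c / (L - c)) ≠ 0 := (sqrt_pos.mpr (div_pos hc0 hLc)).ne'
    rw [one_add_one_div_mul_div_two hq, hsum, sqrt_div_mul_add_div_sqrt_div hLc hc0, mul_comm c]
    ring

/-- Let `L > 0` and `c ∈ (0, L]`. For `p > 1`, the function
`g p = (1 + 1/p)·(p(L - c) + c)/2` is bounded below by `L/2 + √(c(L-c))`, this value is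
attained at `p = √(c/(L-c))` when `c < L`, and if `c > (2+√2)L/4` then
`L/2 + √(c(L-c)) < c`. -/
theorem best_packing_g_min (L c : ℝ) (hL : 0 < L) (hc : c ∈ Set.Ioc (0 : ℝ) L) :
    (∀ p : ℝ, 1 < p →
      L / 2 + Real.sqrt (c * (L - c)) ≤ (1 + 1 / p) * (p * (L - c) + c) / 2) ∧
    (c < L →
      (1 + 1 / Real.sqrt (c / (L - c))) * (Real.sqrt (c / (L - c)) * (L - c) + c) / 2 =
        L / 2 + Real.sqrt (c * (L - c))) ∧
    ((2 + Real.sqrt 2) * L / 4 < c → L / 2 + Real.sqrt (c * (L - c)) < c) :=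
  best_packing_g_min_general L c hc
end

section
/- Let L > 0 and let (d_k)_{k=1}^n and (e_j)_{j=1}^{3n/2} be positive reals (n even) such that Σ_k d_k ≤ L, Σ_j e_j ≤ L, and at least n(1/2 - ε/δ) of the values d_k with |d_k - L/n| < δ/n appear among the e_j (with δ = L/6). If Σ_k |d_k - L/n| ≤ ε, then Σ_j |e_j - L/(3n/2)| ≥ (1/2 - 6ε/L)·L/6. -/
/-! Every surviving gap lies within `L/(6n)` of the old mean `L/n`, hence at distance at least
`L/(6n)` from the new mean `L/(3n/2) = 4L/(6n)`. At least `n(1/2 - 6ε/L)` gaps survive, and they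
occupy distinct positions of the refined configuration, so together they already contribute
`n(1/2 - 6ε/L) · L/(6n)` to its deviation. -/

open Finset

theorem sum_comp_le_univ_sum_of_injOn {ι κ M : Type*} [Fintype κ] [AddCommMonoid M]
    [PartialOrder M] [IsOrderedAddMonoid M] {s : Finset ι} {φ : ι → κ} (hφ : Set.InjOn φ s)
    (f : κ → M) (hf : ∀ j, 0 ≤ f j) : ∑ i ∈ s, f (φ i) ≤ ∑ j, f j := by
  classical
  rw [← sum_image hφ]
  exact sum_le_univ_sum_of_nonneg hf

theorem le_abs_sub_of_abs_sub_lt {α : Type*} [AddCommGroup α] [LinearOrder α]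
    [IsOrderedAddMonoid α] {x a b δ : α} (h : |x - a| < δ) : a - b - δ ≤ |x - b| := by
  rw [abs_sub_comm] at h
  rw [sub_le_iff_le_add]
  calc a - b ≤ |a - b| := le_abs_self _
    _ ≤ |a - x| + |x - b| := abs_sub_le a x b
    _ ≤ |x - b| + δ := by rw [add_comm]; gcongr

theorem div_six_mul_le_abs_sub_div_of_abs_sub_lt {n : ℕ} (hn : 0 < n) {L x : ℝ}
    (hx : |x - L / n| < L / 6 / n) : L / (6 * n) ≤ |x - L / (3 * (n : ℝ) / 2)| := by
  have hn0 : (n : ℝ) ≠ 0 := by positivity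
  have hgap : L / (6 * n) = L / n - L / (3 * (n : ℝ) / 2) - L / 6 / n := by
    field_simp
    ring
  exact hgap ▸ le_abs_sub_of_abs_sub_lt hx

theorem gap_survival_lower_bound_general (n : ℕ) (hn1 : 1 ≤ n)
    (L ε : ℝ) (hL : 0 < L)
    (d : Fin n → ℝ) (e : Fin (3 * n / 2) → ℝ)
    (S : Finset (Fin n))
    (hScard : (n : ℝ) * (1 / 2 - ε / (L / 6)) ≤ S.card)
    (hSdev : ∀ k ∈ S, |d k - L / n| < (L / 6) / n)
    (φ : Fin n → Fin (3 * n / 2)) (hφ : Set.InjOn φ S)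
    (hφe : ∀ k ∈ S, e (φ k) = d k) :
    (1 / 2 - 6 * ε / L) * (L / 6) ≤ ∑ j, |e j - L / (3 * (n : ℝ) / 2)| := by
  have hn0 : (0 : ℝ) < n := by exact_mod_cast hn1
  calc (1 / 2 - 6 * ε / L) * (L / 6) = n * (1 / 2 - ε / (L / 6)) * (L / (6 * n)) := by
        field_simp
    _ ≤ S.card * (L / (6 * n)) := by gcongr
    _ ≤ ∑ k ∈ S, |e (φ k) - L / (3 * (n : ℝ) / 2)| := by
        rw [← nsmul_eq_mul]
        refine card_nsmul_le_sum _ _ _ fun k hk => ?_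
        rw [hφe k hk]
        exact div_six_mul_le_abs_sub_div_of_abs_sub_lt hn1 (hSdev k hk)
    _ ≤ ∑ j, |e j - L / (3 * (n : ℝ) / 2)| :=
        sum_comp_le_univ_sum_of_injOn hφ (fun j => |e j - L / (3 * (n : ℝ) / 2)|)
          fun _ => abs_nonneg _

/-- Combinatorial core of the proof that no sequence on a rectifiable arc of length `L`
is asymptotically `s`-energy minimizing for `s > 1`. With `δ = L/6`: if the gaps
`d k` (summing to at most `L`) satisfy `∑ |d k - L/n| ≤ ε`, and at least `n(1/2 - ε/δ)`
of the gaps `d k` with `|d k - L/n| < δ/n` reappear (injectively) among the gaps `e j`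
of the refined configuration of `3n/2` gaps, then
`∑_j |e j - L/(3n/2)| ≥ (1/2 - 6ε/L)·L/6`. -/
theorem gap_survival_lower_bound (n : ℕ) (hn : Even n) (hn1 : 1 ≤ n)
    (L ε : ℝ) (hL : 0 < L) (hε : 0 ≤ ε)
    (d : Fin n → ℝ) (e : Fin (3 * n / 2) → ℝ)
    (hd : ∀ k, 0 < d k) (he : ∀ j, 0 < e j)
    (hdsum : ∑ k, d k ≤ L) (hesum : ∑ j, e j ≤ L)
    (hdev : ∑ k, |d k - L / n| ≤ ε)
    (S : Finset (Fin n))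
    (hScard : (n : ℝ) * (1 / 2 - ε / (L / 6)) ≤ S.card)
    (hSdev : ∀ k ∈ S, |d k - L / n| < (L / 6) / n)
    (φ : Fin n → Fin (3 * n / 2)) (hφ : Set.InjOn φ S)
    (hφe : ∀ k ∈ S, e (φ k) = d k) :
    (1 / 2 - 6 * ε / L) * (L / 6) ≤ ∑ j, |e j - L / (3 * (n : ℝ) / 2)| :=
  gap_survival_lower_bound_general n hn1 L ε hL d e S hScard hSdev φ hφ hφe
end

section
/- Let n ≥ 1 and let X = {x_0, …, x_n} and Y = {x_0, …, x_{n + n/p}} (p > 1 rational with n/p ∈ ℤ) be nested finite subsets of a rectifiable Jordan arc Γ of length L, listed in order along the arc. Then ((p-1)n/p)·δ(X) + (2n/p)·δ(Y) ≤ L, where δ(ω) = min distance between distinct points of ω. -/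
/-!
The distances between consecutive points of `Y` sum to at most `L`. Each of the `n + q` gaps of
`Y` is at least `δY`. A gap of `X` that contains no point of `Y \ X` is also a gap of `Y`, and is
at least `δX`; since the `q` new points lie in at most `q` of the `n` gaps of `X`, at least `n - q`
gaps of `Y` are of this kind.
-/

open Finset

theorem pos_of_eVariationOn_eq_ofReal {α E : Type*} [LinearOrder α] [EMetricSpace E]
    {f : α → E} {s : Set α} {L : ℝ} (hL : eVariationOn f s = ENNReal.ofReal L)
    {a b : α} (ha : a ∈ s) (hb : b ∈ s) (hab : f a ≠ f b) : 0 < L :=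
  ENNReal.ofReal_pos.mp (hL ▸ (edist_pos.mpr hab).trans_le (eVariationOn.edist_le f ha hb))

theorem eVariationOn.sum_edist_fin_le {α E : Type*} [LinearOrder α] [PseudoEMetricSpace E]
    {f : α → E} {s : Set α} {N : ℕ} {u : Fin (N + 1) → α} (hu : Monotone u)
    (us : ∀ i, u i ∈ s) :
    ∑ i : Fin N, edist (f (u i.succ)) (f (u i.castSucc)) ≤ eVariationOn f s := by
  let v : ℕ → α := fun k ↦ u ⟨min k N, by omega⟩
  have hv : Monotone v := fun j k hjk ↦ hu (by simp only [Fin.le_def]; omega)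
  convert eVariationOn.sum_le (f := f) (n := N) hv fun k ↦ us _ using 1
  rw [← Fin.sum_univ_eq_sum_range (fun k ↦ edist (f (v (k + 1))) (f (v k)))]
  refine sum_congr rfl fun i _ ↦ ?_
  simp only [v, Fin.succ, Fin.castSucc, Fin.castAdd, Fin.castLE]
  congr <;> omega

theorem sum_dist_le_of_eVariationOn_eq_ofReal {α E : Type*} [LinearOrder α] [PseudoMetricSpace E]
    {f : α → E} {s : Set α} {L : ℝ} (hL : eVariationOn f s = ENNReal.ofReal L) (hL0 : 0 ≤ L)
    {N : ℕ} {u : Fin (N + 1) → α} (hu : Monotone u) (us : ∀ i, u i ∈ s) :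
    ∑ i : Fin N, dist (f (u i.succ)) (f (u i.castSucc)) ≤ L := by
  rw [← ENNReal.ofReal_le_ofReal_iff hL0, ENNReal.ofReal_sum_of_nonneg fun _ _ ↦ dist_nonneg, ← hL]
  simpa only [edist_dist] using eVariationOn.sum_edist_fin_le (f := f) hu us

theorem le_sum_of_card_le {ι : Type*} [Fintype ι] {d : ι → ℝ} {A : Finset ι} {a b : ℝ} {m : ℕ}
    (hm : m ≤ #A) (ha : ∀ i ∈ A, a ≤ d i) (hb : ∀ i, b ≤ d i) :
    m * a + (Fintype.card ι - m) * b ≤ ∑ i, d i := by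
  classical
  obtain ⟨B, hBA, hB⟩ := exists_subset_card_eq hm
  have hBa : #B • a ≤ ∑ i ∈ B, d i := card_nsmul_le_sum _ _ _ fun i hi ↦ ha i (hBA hi)
  have hBb : #Bᶜ • b ≤ ∑ i ∈ Bᶜ, d i := card_nsmul_le_sum _ _ _ fun i _ ↦ hb i
  rw [card_compl, hB, nsmul_eq_mul, Nat.cast_sub (hB ▸ card_le_univ B)] at hBb
  rw [hB, nsmul_eq_mul] at hBa
  linarith [sum_add_sum_compl B d]

section Gaps

variable {n N : ℕ} {σ : Fin (n + 1) → Fin (N + 1)}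

theorem val_apply_castSucc_lt (hσ : StrictMono σ) (i : Fin n) : (σ i.castSucc : ℕ) < N :=
  Nat.lt_of_lt_of_le (hσ Fin.castSucc_lt_succ) (Fin.is_le _)

/-- Gap `k` joins points `k` and `k + 1` of `Y = Fin (N + 1)`; it is unrefined when it is also a gap
of `X = range σ`, i.e. when it contains no point of `Y \ X`. -/
def unrefinedGaps (σ : Fin (n + 1) → Fin (N + 1)) : Finset (Fin N) :=
  {k | ∃ i : Fin n, σ i.castSucc = k.castSucc ∧ σ i.succ = k.succ}

/-- A gap `i` of `X` with `σ i + 1 < σ (i + 1)` contains the point `σ i + 1` of `Y \ X`. -/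
theorem card_refined_le (hσ : StrictMono σ) :
    #{i : Fin n | (σ i.castSucc : ℕ) + 1 < σ i.succ} ≤ N - n := by
  classical
  let next (i : Fin n) : Fin (N + 1) :=
    ⟨σ i.castSucc + 1, by have := val_apply_castSucc_lt hσ i; omega⟩
  calc #{i : Fin n | (σ i.castSucc : ℕ) + 1 < σ i.succ}
      ≤ #(univ.image σ)ᶜ := by
        refine card_le_card_of_injOn next (fun i hi ↦ ?_) (fun i _ j _ hij ↦ ?_)
        · simp only [coe_filter, mem_univ, true_and, Set.mem_ofPred_eq] at hi
          simp only [coe_compl, coe_image, coe_univ, Set.image_univ, Set.mem_compl_iff,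
            Set.mem_range, not_exists]
          intro j hj
          have hlo : i.castSucc < j := hσ.lt_iff_lt.mp (by simp [Fin.lt_def, hj, next])
          have hhi : j < i.succ := hσ.lt_iff_lt.mp (by simp [Fin.lt_def, hj, next]; omega)
          simp only [Fin.lt_def, Fin.val_castSucc, Fin.val_succ] at hlo hhi
          omega
        · have : σ i.castSucc = σ j.castSucc := Fin.ext (by simpa [next] using hij)
          exact Fin.castSucc_injective _ (hσ.injective this)
    _ = N - n := by
        rw [card_compl, card_image_of_injective _ hσ.injective]
        simp

theorem card_unrefined_le_card_unrefinedGaps (hσ : StrictMono σ) :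
    #{i : Fin n | ¬(σ i.castSucc : ℕ) + 1 < σ i.succ} ≤ #(unrefinedGaps σ) := by
  refine card_le_card_of_injOn (fun i ↦ (σ i.castSucc).castLT (val_apply_castSucc_lt hσ i))
    (fun i hi ↦ ?_)
    (fun i _ j _ hij ↦ Fin.castSucc_injective _ (hσ.injective (Fin.ext (Fin.val_eq_of_eq hij :))))
  simp only [coe_filter, mem_univ, true_and, Set.mem_ofPred_eq] at hi
  have := Fin.lt_def.mp (hσ (Fin.castSucc_lt_succ (i := i)))
  simp only [unrefinedGaps, coe_filter, mem_univ, true_and, Set.mem_ofPred_eq]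
  exact ⟨i, rfl, Fin.ext (by simp only [Fin.val_succ, Fin.val_castLT]; omega)⟩

theorem card_unrefinedGaps (hσ : StrictMono σ) : n ≤ #(unrefinedGaps σ) + (N - n) := by
  have := card_filter_add_card_filter_not (s := univ)
    fun i : Fin n ↦ (σ i.castSucc : ℕ) + 1 < σ i.succ
  rw [card_univ, Fintype.card_fin] at this
  linarith [card_refined_le hσ, card_unrefined_le_card_unrefinedGaps hσ]

end Gaps

theorem nested_best_packing_bound_general {P : ℕ}
    (γ : ℝ → EuclideanSpace ℝ (Fin P))
    (hinj : Set.InjOn γ (Set.Icc 0 1))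
    (L : ℝ) (hL : eVariationOn γ (Set.Icc 0 1) = ENNReal.ofReal L)
    (n q : ℕ) (hqn : q < n)
    (t : Fin (n + q + 1) → ℝ) (ht : StrictMono t)
    (htmem : ∀ i, t i ∈ Set.Icc (0 : ℝ) 1)
    (σ : Fin (n + 1) → Fin (n + q + 1)) (hσ : StrictMono σ)
    (δX δY : ℝ)
    (hδX : ∀ i j : Fin (n + 1), i ≠ j → δX ≤ dist (γ (t (σ i))) (γ (t (σ j))))
    (hδY : ∀ i j : Fin (n + q + 1), i ≠ j → δY ≤ dist (γ (t i)) (γ (t j))) :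
    ((n : ℝ) - q) * δX + 2 * (q : ℝ) * δY ≤ L := by
  have hL0 : 0 ≤ L := by
    refine (pos_of_eVariationOn_eq_ofReal hL (htmem 0) (htmem (Fin.last _)) ?_).le
    exact hinj.ne (htmem _) (htmem _) (ht.injective.ne (by simp [Fin.ext_iff]; omega))
  have hcard : n - q ≤ #(unrefinedGaps σ) := by
    have := card_unrefinedGaps hσ
    omega
  have hX : ∀ k ∈ unrefinedGaps σ, δX ≤ dist (γ (t k.succ)) (γ (t k.castSucc)) := by
    intro k hk
    simp only [unrefinedGaps, mem_filter, mem_univ, true_and] at hk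
    obtain ⟨i, hi, hi'⟩ := hk
    rw [← hi, ← hi']
    exact hδX _ _ Fin.castSucc_lt_succ.ne'
  have hY (k : Fin (n + q)) : δY ≤ dist (γ (t k.succ)) (γ (t k.castSucc)) :=
    hδY _ _ Fin.castSucc_lt_succ.ne'
  have hsum := (le_sum_of_card_le hcard hX hY).trans
    (sum_dist_le_of_eVariationOn_eq_ofReal hL hL0 ht.monotone htmem)
  rw [Fintype.card_fin, Nat.cast_sub hqn.le] at hsum
  push_cast at hsum
  linarith

/-- Let `Γ` be a rectifiable Jordan arc of length `L` in `ℝ^P`, parametrized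
injectively and continuously by `γ` on `[0,1]`. Let `Y = {γ(t i)}` be `n + q + 1`
points listed in order along the arc (`q = n/p` with `1 ≤ q < n`, i.e. `p = n/q > 1`),
and let `X ⊆ Y` consist of `n + 1` of them (chosen by the strictly monotone selection
`σ`). If `δX` (resp. `δY`) is a lower bound for the distances between distinct points
of `X` (resp. `Y`), in particular for their minimal separations, then
`((p-1)n/p)·δX + (2n/p)·δY = (n - q)·δX + 2q·δY ≤ L`. -/
theorem nested_best_packing_bound {P : ℕ}
    (γ : ℝ → EuclideanSpace ℝ (Fin P))
    (hcont : ContinuousOn γ (Set.Icc 0 1)) (hinj : Set.InjOn γ (Set.Icc 0 1))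
    (L : ℝ) (hL : eVariationOn γ (Set.Icc 0 1) = ENNReal.ofReal L)
    (n q : ℕ) (hq : 1 ≤ q) (hqn : q < n)
    (t : Fin (n + q + 1) → ℝ) (ht : StrictMono t)
    (htmem : ∀ i, t i ∈ Set.Icc (0 : ℝ) 1)
    (σ : Fin (n + 1) → Fin (n + q + 1)) (hσ : StrictMono σ)
    (δX δY : ℝ)
    (hδX : ∀ i j : Fin (n + 1), i ≠ j → δX ≤ dist (γ (t (σ i))) (γ (t (σ j))))
    (hδY : ∀ i j : Fin (n + q + 1), i ≠ j → δY ≤ dist (γ (t i)) (γ (t j)))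
    (hδX0 : 0 ≤ δX) (hδY0 : 0 ≤ δY) :
    ((n : ℝ) - q) * δX + 2 * (q : ℝ) * δY ≤ L :=
  nested_best_packing_bound_general γ hinj L hL n q hqn t ht htmem σ hσ δX δY hδX hδY
end

section
/- Let A ⊂ ℝ^p be compact with H_δ(A) > 0 and let w: A×A → [0,∞] be a bounded lower semicontinuous symmetric weight. Then any greedy (w,s)-energy sequence with s > δ satisfies E_s^w(α_N) ≤ M·‖w‖·H_δ^∞(A)^{-s/δ}·N^{1+s/δ} for all N ≥ 2, where M depends only on s, δ, A, ‖w‖ = sup w, and H_δ^∞ is the δ-dimensional Hausdorff content. -/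
open MeasureTheory

/-- The `δ`-dimensional Hausdorff content `H_δ^∞(A) = inf { ∑ (diam G_i)^δ : A ⊆ ⋃ G_i }`. -/
noncomputable def hausdorffContent {P : ℕ} (δ : ℝ) (A : Set (EuclideanSpace ℝ (Fin P))) :
    ENNReal :=
  ⨅ (G : ℕ → Set (EuclideanSpace ℝ (Fin P))) (_ : A ⊆ ⋃ i, G i),
    ∑' i, EMetric.diam (G i) ^ δ

/-!
Instead of a Frostman measure, the argument uses the subadditivity of the Hausdorff content
`H_δ^∞` directly. Given `n` points `a_i` and a scale `r`, let `E_k` be the set of points whose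
ball of radius `2^k r` contains at least `2^(k t)` of the `a_i`, where `δ < t < s`. A Vitali
covering gives `H_δ^∞(E_k) ≲ n r^δ 2^(k (δ - t))`, a geometric series in `k`, so for
`r^δ ≈ H_δ^∞(A) / n` the sets `E_k` cannot cover `A`. At a point `x ∈ A` outside all of them,
no `a_i` lies within `r` of `x` (this is `E_0`), and summing `|x - a_i|^(-s)` over the dyadic
annuli around `x` gives `≲ r^(-s) ≈ (n / H_δ^∞(A))^(s/δ)`. By greedy minimality and `w ≤ C`,
the `n`-th row of the energy is at most `C` times this, and summing the rows over `n < N` gives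
the bound.
-/

open Metric Finset
open scoped ENNReal

namespace MeasureTheory.OuterMeasure

-- `boundedBy` charges nothing for `∅` whatever the sign of `δ`; for `δ > 0` this is the infimum
-- of `∑ ediam (t n) ^ δ` over countable covers (`hausdorffContent_apply`).
noncomputable def hausdorffContent (X : Type*) [PseudoEMetricSpace X] (δ : ℝ) : OuterMeasure X :=
  boundedBy fun s => ediam s ^ δ

variable {X : Type*} {δ : ℝ}

section PseudoEMetricSpace

variable [PseudoEMetricSpace X]

theorem hausdorffContent_le_ediam_rpow (s : Set X) :
    OuterMeasure.hausdorffContent X δ s ≤ ediam s ^ δ :=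
  boundedBy_le s

theorem hausdorffContent_apply (hδ : 0 < δ) (s : Set X) :
    OuterMeasure.hausdorffContent X δ s =
      ⨅ (t : ℕ → Set X) (_ : s ⊆ ⋃ n, t n), ∑' n, ediam (t n) ^ δ := by
  rw [hausdorffContent, boundedBy_apply]
  congr! with t _ n
  rcases (t n).eq_empty_or_nonempty with h | h
  · simp [h, hδ]
  · simp [h]

end PseudoEMetricSpace

theorem hausdorffMeasure_eq_zero_of_hausdorffContent_eq_zero [EMetricSpace X] [MeasurableSpace X]
    [BorelSpace X] (hδ : 0 < δ) {s : Set X} (h : OuterMeasure.hausdorffContent X δ s = 0) :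
    μH[δ] s = 0 := by
  rw [Measure.hausdorffMeasure_apply]
  refine ENNReal.iSup_eq_zero.2 fun r => ENNReal.iSup_eq_zero.2 fun hr => ?_
  refine nonpos_iff_eq_zero.1 (ENNReal.le_of_forall_pos_le_add fun ε hε _ => ?_)
  have hsmall : OuterMeasure.hausdorffContent X δ s < min (ε : ℝ≥0∞) (r ^ δ) :=
    h ▸ lt_min (by exact_mod_cast hε) (ENNReal.rpow_pos_of_nonneg hr hδ.le)
  -- a cover with `∑ ediam ^ δ < r ^ δ` only uses sets of diameter `< r`
  simp only [hausdorffContent, boundedBy_apply, iInf_lt_iff] at hsmall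
  obtain ⟨t, hst, ht⟩ := hsmall
  have hdiam : ∀ n, ediam (t n) ≤ r := fun n => by
    rcases (t n).eq_empty_or_nonempty with he | hne
    · simp [he]
    · refine ((ENNReal.rpow_lt_rpow_iff hδ).1
        (lt_of_le_of_lt ?_ (ht.trans_le (min_le_right _ _)))).le
      exact (le_iSup (fun _ : (t n).Nonempty => ediam (t n) ^ δ) hne).trans (ENNReal.le_tsum n)
  exact iInf₂_le_of_le t hst (iInf_le_of_le hdiam (by simpa using ht.le.trans (min_le_left _ _)))

theorem hausdorffContent_closedBall_le [PseudoMetricSpace X] (hδ : 0 ≤ δ) (x : X) {r : ℝ}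
    (hr : 0 ≤ r) :
    OuterMeasure.hausdorffContent X δ (closedBall x r) ≤ ENNReal.ofReal ((2 * r) ^ δ) := by
  rw [← ENNReal.ofReal_rpow_of_nonneg (by positivity) hδ]
  refine (hausdorffContent_le_ediam_rpow _).trans (ENNReal.rpow_le_rpow ?_ hδ)
  exact ediam_le_of_forall_dist_le fun y hy z hz =>
    (dist_triangle_right y z x).trans (by linarith [mem_closedBall.1 hy, mem_closedBall.1 hz])

theorem hausdorffContent_ne_top [PseudoMetricSpace X] (hδ : 0 ≤ δ) {s : Set X}
    (hs : Bornology.IsBounded s) : OuterMeasure.hausdorffContent X δ s ≠ ⊤ :=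
  ne_top_of_le_ne_top (ENNReal.rpow_ne_top_of_nonneg hδ hs.ediam_ne_top)
    (hausdorffContent_le_ediam_rpow s)

end MeasureTheory.OuterMeasure

theorem hausdorffContent_eq_outerMeasure {P : ℕ} {δ : ℝ} (hδ : 0 < δ)
    (A : Set (EuclideanSpace ℝ (Fin P))) :
    hausdorffContent δ A = OuterMeasure.hausdorffContent _ δ A :=
  (OuterMeasure.hausdorffContent_apply hδ A).symm

section

variable {X ι : Type*} [PseudoMetricSpace X]

noncomputable def nearCount (S : Finset ι) (a : ι → X) (x : X) (ρ : ℝ) : ℕ :=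
  #{i ∈ S | dist x (a i) < ρ}

theorem exists_card_mul_le_and_subset_iUnion_closedBall (S : Finset ι) (a : ι → X) {ρ l : ℝ}
    (hl : 0 < l) :
    ∃ U : Finset ι, (#U : ℝ) * l ≤ #S ∧
      {x | l ≤ nearCount S a x ρ} ⊆ ⋃ j ∈ U, closedBall (a j) (8 * ρ) := by
  classical
  -- The `2ρ`-balls around the points of `I` each hold `l` of the `a i`; a disjoint Vitali
  -- subfamily therefore has at most `#S / l` members, and its enlargements cover the set.
  set I := {i ∈ S | l ≤ nearCount S a (a i) (2 * ρ)}
  obtain ⟨u, huI, hdisj, hcover⟩ :=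
    Vitali.exists_disjoint_subfamily_covering_enlargement_closedBall (I : Set ι) a
      (fun _ => 2 * ρ) (2 * ρ) (fun _ _ => le_rfl) 4 (by norm_num)
  have hu : u.Finite := I.finite_toSet.subset huI
  refine ⟨hu.toFinset, ?_, fun x hx => ?_⟩
  · have hfibers : (hu.toFinset : Set ι).PairwiseDisjoint
        fun j => ({i ∈ S | dist (a j) (a i) < 2 * ρ} : Finset ι) := by
      intro j hj j' hj' hne
      refine Finset.disjoint_left.2 fun i hi hi' => Set.disjoint_left.1
        (hdisj (hu.mem_toFinset.1 hj) (hu.mem_toFinset.1 hj') hne)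
        (mem_closedBall'.2 (mem_filter.1 hi).2.le) (mem_closedBall'.2 (mem_filter.1 hi').2.le)
    calc (#hu.toFinset : ℝ) * l = ∑ j ∈ hu.toFinset, l := by rw [sum_const, nsmul_eq_mul]
      _ ≤ ∑ j ∈ hu.toFinset, (nearCount S a (a j) (2 * ρ) : ℝ) :=
        sum_le_sum fun j hj => (mem_filter.1 (huI (hu.mem_toFinset.1 hj))).2
      _ = #(hu.toFinset.biUnion fun j => {i ∈ S | dist (a j) (a i) < 2 * ρ}) := by
        rw [card_biUnion hfibers]; push_cast; rfl
      _ ≤ #S := by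
        exact_mod_cast card_le_card (biUnion_subset.2 fun j _ => filter_subset _ _)
  · obtain ⟨i, hi⟩ : ({i ∈ S | dist x (a i) < ρ} : Finset ι).Nonempty :=
      card_pos.1 (by exact_mod_cast hl.trans_le hx)
    obtain ⟨hiS, hxi⟩ := mem_filter.1 hi
    have hiI : i ∈ I := by
      refine mem_filter.2 ⟨hiS, (show l ≤ _ from hx).trans ?_⟩
      refine Nat.cast_le.2 (card_le_card fun k hk => ?_)
      obtain ⟨hkS, hxk⟩ := mem_filter.1 hk
      exact mem_filter.2 ⟨hkS, (dist_triangle_left _ _ x).trans_lt (by linarith)⟩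
    obtain ⟨j, hju, hj⟩ := hcover i hiI
    have hxj := hj (mem_closedBall.2 (by linarith [dist_nonneg (x := x) (y := a i)]))
    rw [← mul_assoc, show (4 : ℝ) * 2 = 8 by norm_num] at hxj
    exact Set.mem_iUnion₂.2 ⟨j, hu.mem_toFinset.2 hju, hxj⟩

theorem hausdorffContent_setOf_le_nearCount_le {δ : ℝ} (hδ : 0 ≤ δ) (S : Finset ι) (a : ι → X)
    {ρ l : ℝ} (hρ : 0 ≤ ρ) (hl : 0 < l) :
    OuterMeasure.hausdorffContent X δ {x | l ≤ nearCount S a x ρ} ≤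
      ENNReal.ofReal (#S / l * (16 * ρ) ^ δ) := by
  obtain ⟨U, hU, hcover⟩ := exists_card_mul_le_and_subset_iUnion_closedBall S a (ρ := ρ) hl
  calc OuterMeasure.hausdorffContent X δ {x | l ≤ nearCount S a x ρ}
      ≤ ∑ j ∈ U, OuterMeasure.hausdorffContent X δ (closedBall (a j) (8 * ρ)) :=
        (measure_mono hcover).trans (measure_biUnion_finset_le U _)
    _ ≤ ∑ j ∈ U, ENNReal.ofReal ((16 * ρ) ^ δ) := sum_le_sum fun j _ => by
        have h := OuterMeasure.hausdorffContent_closedBall_le hδ (a j) (by positivity : 0 ≤ 8 * ρ)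
        rwa [← mul_assoc, show (2 : ℝ) * 8 = 16 by norm_num] at h
    _ = ENNReal.ofReal (#U * (16 * ρ) ^ δ) := by
        rw [sum_const, nsmul_eq_mul, ENNReal.ofReal_mul (by positivity), ENNReal.ofReal_natCast]
    _ ≤ ENNReal.ofReal (#S / l * (16 * ρ) ^ δ) :=
        ENNReal.ofReal_le_ofReal (by gcongr; exact (le_div_iff₀ hl).2 hU)

theorem sum_dist_rpow_neg_le_tsum {S : Finset ι} {a : ι → X} {x : X} {r s : ℝ} (hs : 0 ≤ s)
    (hr : 0 < r) (hfar : ∀ i ∈ S, r ≤ dist x (a i)) {L : ℕ → ℝ}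
    (hL : ∀ k, (nearCount S a x (2 ^ (k + 1) * r) : ℝ) ≤ L k)
    (hsum : Summable fun k => (2 ^ k * r) ^ (-s) * L k) :
    ∑ i ∈ S, dist x (a i) ^ (-s) ≤ ∑' k, (2 ^ k * r) ^ (-s) * L k := by
  have hlevel : ∀ i ∈ S, ∃ k : ℕ, 2 ^ k * r ≤ dist x (a i) ∧ dist x (a i) < 2 ^ (k + 1) * r :=
    fun i hi => by
      obtain ⟨k, hk⟩ := exists_nat_pow_near ((one_le_div hr).2 (hfar i hi)) one_lt_two
      exact ⟨k, (le_div_iff₀ hr).1 hk.1, (div_lt_iff₀ hr).1 hk.2⟩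
  choose! κ hκ using hlevel
  have hfiber : ∀ k, ∑ i ∈ S with κ i = k, dist x (a i) ^ (-s) ≤ (2 ^ k * r) ^ (-s) * L k := by
    intro k
    calc ∑ i ∈ S with κ i = k, dist x (a i) ^ (-s)
        ≤ ∑ i ∈ S with κ i = k, (2 ^ k * r) ^ (-s) := sum_le_sum fun i hi => by
          obtain ⟨hiS, rfl⟩ := mem_filter.1 hi
          exact Real.rpow_le_rpow_of_nonpos (by positivity) (hκ i hiS).1 (by linarith)
      _ ≤ (2 ^ k * r) ^ (-s) * nearCount S a x (2 ^ (k + 1) * r) := by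
        rw [sum_const, nsmul_eq_mul, mul_comm]
        refine mul_le_mul_of_nonneg_left (Nat.cast_le.2 (card_le_card fun i hi => ?_))
          (by positivity)
        obtain ⟨hiS, rfl⟩ := mem_filter.1 hi
        exact mem_filter.2 ⟨hiS, (hκ i hiS).2⟩
      _ ≤ (2 ^ k * r) ^ (-s) * L k := by gcongr; exact hL k
  calc ∑ i ∈ S, dist x (a i) ^ (-s)
      = ∑ k ∈ S.image κ, ∑ i ∈ S with κ i = k, dist x (a i) ^ (-s) :=
        (sum_fiberwise_of_maps_to (fun i hi => mem_image_of_mem κ hi) _).symm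
    _ ≤ ∑ k ∈ S.image κ, (2 ^ k * r) ^ (-s) * L k := sum_le_sum fun k _ => hfiber k
    _ ≤ ∑' k, (2 ^ k * r) ^ (-s) * L k :=
        hsum.sum_le_tsum _ fun k _ =>
          mul_nonneg (by positivity) ((Nat.cast_nonneg _).trans (hL k))

theorem two_pow_mul_rpow (k : ℕ) {r : ℝ} (hr : 0 ≤ r) (y : ℝ) :
    ((2 : ℝ) ^ k * r) ^ y = (2 ^ y) ^ k * r ^ y := by
  rw [Real.mul_rpow (by positivity) hr, Real.rpow_pow_comm zero_le_two]

theorem exists_mem_sum_dist_rpow_neg_le {A : Set X} {S : Finset ι} {a : ι → X} {δ t s r : ℝ}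
    (hδ : 0 ≤ δ) (hδt : δ < t) (hts : t < s) (hr : 0 < r)
    (hA : ENNReal.ofReal (#S * (16 * r) ^ δ / (1 - 2 ^ (δ - t))) <
      OuterMeasure.hausdorffContent X δ A) :
    ∃ x ∈ A, ∑ i ∈ S, dist x (a i) ^ (-s) ≤ 2 ^ t * r ^ (-s) / (1 - 2 ^ (t - s)) := by
  have hgeom : ∀ {y : ℝ}, y < 0 → (0 : ℝ) ≤ 2 ^ y ∧ (2 : ℝ) ^ y < 1 := fun hy =>
    ⟨by positivity, Real.rpow_lt_one_of_one_lt_of_neg one_lt_two hy⟩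
  obtain ⟨hq₀, hq₁⟩ := hgeom (y := δ - t) (by linarith)
  obtain ⟨hp₀, hp₁⟩ := hgeom (y := t - s) (by linarith)
  set E : ℕ → Set X := fun k => {x | ((2 : ℝ) ^ t) ^ k ≤ nearCount S a x (2 ^ k * r)}
  have hE : ∀ k, OuterMeasure.hausdorffContent X δ (E k) ≤
      ENNReal.ofReal (#S * (16 * r) ^ δ * (2 ^ (δ - t)) ^ k) := fun k => by
    refine (hausdorffContent_setOf_le_nearCount_le hδ S a (by positivity) (by positivity)).trans
      (le_of_eq (congrArg ENNReal.ofReal ?_))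
    rw [mul_left_comm, two_pow_mul_rpow k (by positivity), Real.rpow_sub two_pos, div_pow]
    field_simp
  obtain ⟨x, hxA, hxE⟩ : ∃ x ∈ A, ∀ k, x ∉ E k := by
    by_contra! hcov
    refine hA.not_ge ((measure_mono fun x hx => Set.mem_iUnion.2 (hcov x hx)).trans
      ((measure_iUnion_le E).trans ?_))
    calc ∑' k, OuterMeasure.hausdorffContent X δ (E k)
        ≤ ∑' k, ENNReal.ofReal (#S * (16 * r) ^ δ * (2 ^ (δ - t)) ^ k) := ENNReal.tsum_le_tsum hE
      _ = ENNReal.ofReal (#S * (16 * r) ^ δ / (1 - 2 ^ (δ - t))) := by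
        rw [← ENNReal.ofReal_tsum_of_nonneg (fun k => by positivity)
          ((summable_geometric_of_lt_one hq₀ hq₁).mul_left _), tsum_mul_left,
          tsum_geometric_of_lt_one hq₀ hq₁, div_eq_mul_inv]
  simp only [E, Set.mem_ofPred_eq, not_le] at hxE
  have hfar : ∀ i ∈ S, r ≤ dist x (a i) := fun i hi => by
    by_contra! hi'
    have h0 := hxE 0
    rw [pow_zero, pow_zero, one_mul, Nat.cast_lt_one, nearCount, card_eq_zero] at h0
    exact (filter_eq_empty_iff.1 h0) hi hi'
  have hterm : (fun k : ℕ => (2 ^ k * r) ^ (-s) * ((2 : ℝ) ^ t) ^ (k + 1)) =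
      fun k => 2 ^ t * r ^ (-s) * (2 ^ (t - s)) ^ k := funext fun k => by
    rw [two_pow_mul_rpow k hr.le, Real.rpow_sub two_pos, Real.rpow_neg zero_le_two, div_pow,
      pow_succ, inv_pow]
    field_simp
  have hsum := (summable_geometric_of_lt_one hp₀ hp₁).mul_left (2 ^ t * r ^ (-s))
  refine ⟨x, hxA, ?_⟩
  calc ∑ i ∈ S, dist x (a i) ^ (-s)
      ≤ ∑' k, (2 ^ k * r) ^ (-s) * ((2 : ℝ) ^ t) ^ (k + 1) :=
        sum_dist_rpow_neg_le_tsum (by linarith) hr hfar (fun k => (hxE (k + 1)).le)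
          (hterm ▸ hsum)
    _ = 2 ^ t * r ^ (-s) / (1 - 2 ^ (t - s)) := by
        rw [hterm, tsum_mul_left, tsum_geometric_of_lt_one hp₀ hp₁, div_eq_mul_inv]

theorem exists_mem_sum_dist_rpow_neg_le_mul_rpow {δ s : ℝ} (hδ : 0 < δ) (hs : δ < s) :
    ∃ K > 0, ∀ (A : Set X) (H : ℝ), 0 < H →
      ENNReal.ofReal H ≤ OuterMeasure.hausdorffContent X δ A →
      ∀ (S : Finset ι) (a : ι → X), S.Nonempty →
        ∃ x ∈ A, ∑ i ∈ S, dist x (a i) ^ (-s) ≤ K * (#S / H) ^ (s / δ) := by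
  set t := (δ + s) / 2 with ht
  set c := 1 - (2 : ℝ) ^ (δ - t)
  have hc : 0 < c := sub_pos.2 (Real.rpow_lt_one_of_one_lt_of_neg one_lt_two (by linarith [ht]))
  refine ⟨2 ^ t / c * (2 * 16 ^ δ / c) ^ (s / δ), by positivity, fun A H hH hA S a hS => ?_⟩
  have hn : (0 : ℝ) < #S := by exact_mod_cast hS.card_pos
  -- at this scale the exceptional sets `E_k` of the header carry half the content of `A`
  set u := c * H / (2 * #S * 16 ^ δ) with hu_def
  have hu : 0 < u := by positivity
  set r := u ^ δ⁻¹
  have hr : 0 < r := by positivity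
  have hrδ : r ^ δ = u := by rw [← Real.rpow_mul hu.le, inv_mul_cancel₀ hδ.ne', Real.rpow_one]
  have hbad : ENNReal.ofReal (#S * (16 * r) ^ δ / c) < OuterMeasure.hausdorffContent X δ A := by
    refine lt_of_lt_of_le (ENNReal.ofReal_lt_ofReal_iff hH |>.2 ?_) hA
    rw [Real.mul_rpow (by norm_num) hr.le, hrδ, hu_def]
    field_simp
    linarith
  obtain ⟨x, hxA, hx⟩ := exists_mem_sum_dist_rpow_neg_le (a := a) hδ.le
    (show δ < t by linarith [ht]) (show t < s by linarith [ht]) hr hbad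
  refine ⟨x, hxA, hx.trans (le_of_eq ?_)⟩
  have hrs : r ^ (-s) = (2 * 16 ^ δ / c) ^ (s / δ) * (#S / H) ^ (s / δ) := by
    rw [← Real.rpow_mul hu.le, ← Real.mul_rpow (by positivity) (by positivity),
      show δ⁻¹ * -s = -(s / δ) by ring, Real.rpow_neg hu.le, ← Real.inv_rpow hu.le,
      hu_def, inv_div]
    congr 1
    field_simp
  rw [show t - s = δ - t by rw [ht]; ring, hrs]
  ring

end

theorem sum_range_sum_range_ite_eq {M : Type*} [AddCommMonoid M] (g : ℕ → ℕ → M) (N : ℕ) :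
    ∑ i ∈ range N, ∑ j ∈ range N, (if i = j then 0 else g i j) =
      ∑ k ∈ range N, ∑ i ∈ range k, (g k i + g i k) := by
  induction N with
  | zero => simp
  | succ N ih =>
    have hne : ∀ i ∈ range N, i ≠ N := fun i hi => (mem_range.1 hi).ne
    rw [sum_range_succ, sum_range_succ (fun k => ∑ i ∈ range k, (g k i + g i k)), ← ih]
    simp only [sum_range_succ, sum_add_distrib, ↓reduceIte, add_zero]
    rw [sum_congr rfl fun i hi => if_neg (hne i hi),
      sum_congr rfl fun i hi => if_neg (hne i hi).symm]
    abel

section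

variable {X : Type*} [PseudoMetricSpace X] {w : X → X → ℝ} {a : ℕ → X} {s : ℝ}

theorem greedy_row_le_mul_sum_dist_rpow_neg {A : Set X} {C : ℝ}
    (hwC : ∀ x ∈ A, ∀ y ∈ A, w x y ≤ C) (ha : ∀ n, a n ∈ A) {n : ℕ}
    (hgreedy : ∀ x ∈ A, ∑ i ∈ range n, w (a n) (a i) * dist (a n) (a i) ^ (-s) ≤
      ∑ i ∈ range n, w x (a i) * dist x (a i) ^ (-s))
    {x : X} (hx : x ∈ A) :
    ∑ i ∈ range n, w (a n) (a i) * dist (a n) (a i) ^ (-s) ≤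
      C * ∑ i ∈ range n, dist x (a i) ^ (-s) := by
  rw [mul_sum]
  exact (hgreedy x hx).trans (sum_le_sum fun i _ =>
    mul_le_mul_of_nonneg_right (hwC x hx (a i) (ha i)) (by positivity))

theorem energy_le_of_row_le (hsymm : ∀ x y, w x y = w y x) {N : ℕ} {B : ℝ}
    (hrow : ∀ k ∈ range N, ∑ i ∈ range k, w (a k) (a i) * dist (a k) (a i) ^ (-s) ≤ B) :
    ∑ i ∈ range N, ∑ j ∈ range N,
        (if i = j then 0 else w (a i) (a j) * dist (a i) (a j) ^ (-s)) ≤ 2 * N * B := by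
  calc _ = ∑ k ∈ range N, 2 * ∑ i ∈ range k, w (a k) (a i) * dist (a k) (a i) ^ (-s) := by
        rw [sum_range_sum_range_ite_eq]
        refine sum_congr rfl fun k _ => ?_
        rw [mul_sum]
        refine sum_congr rfl fun i _ => ?_
        rw [hsymm (a i), dist_comm (a i)]
        ring
    _ ≤ ∑ k ∈ range N, 2 * B := sum_le_sum fun k hk => by gcongr; exact hrow k hk
    _ = 2 * N * B := by rw [sum_const, card_range, nsmul_eq_mul]; ring

end

theorem greedy_energy_growth_general {P : ℕ}
    (A : Set (EuclideanSpace ℝ (Fin P))) (hA : IsCompact A)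
    (δ : ℝ) (hδ : 0 < δ)
    (hHaus : 0 < (MeasureTheory.Measure.hausdorffMeasure δ :
      Measure (EuclideanSpace ℝ (Fin P))) A)
    (s : ℝ) (hs : δ < s) :
    ∃ M : ℝ, 0 < M ∧
      ∀ (w : EuclideanSpace ℝ (Fin P) → EuclideanSpace ℝ (Fin P) → ℝ)
        (_ : ∀ x y, 0 ≤ w x y) (_ : ∀ x y, w x y = w y x)
        (_ : LowerSemicontinuous fun p :
          EuclideanSpace ℝ (Fin P) × EuclideanSpace ℝ (Fin P) => w p.1 p.2)
        (C : ℝ) (_ : 0 ≤ C) (_ : ∀ x ∈ A, ∀ y ∈ A, w x y ≤ C)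
        (a : ℕ → EuclideanSpace ℝ (Fin P)) (_ : ∀ n, a n ∈ A)
        (_ : ∀ n, ∀ x ∈ A,
          ∑ i ∈ Finset.range n, w (a n) (a i) * ‖a n - a i‖ ^ (-s) ≤
            ∑ i ∈ Finset.range n, w x (a i) * ‖x - a i‖ ^ (-s))
        (N : ℕ) (_ : 2 ≤ N),
        ∑ i ∈ Finset.range N, ∑ j ∈ Finset.range N,
            (if i = j then 0 else w (a i) (a j) * ‖a i - a j‖ ^ (-s)) ≤
          M * C * (hausdorffContent δ A).toReal ^ (-(s / δ)) * (N : ℝ) ^ (1 + s / δ) := by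
  rw [hausdorffContent_eq_outerMeasure hδ]
  set H := (OuterMeasure.hausdorffContent _ δ A).toReal
  have hHtop := OuterMeasure.hausdorffContent_ne_top hδ.le hA.isBounded
  have hH : 0 < H := ENNReal.toReal_pos (fun h => hHaus.ne'
    (OuterMeasure.hausdorffMeasure_eq_zero_of_hausdorffContent_eq_zero hδ h)) hHtop
  obtain ⟨K, hK, hgood⟩ :=
    exists_mem_sum_dist_rpow_neg_le_mul_rpow (X := EuclideanSpace ℝ (Fin P)) (ι := ℕ) hδ hs
  refine ⟨2 * K, by positivity, fun w _ hsymm _ C hC hwC a ha hgreedy N hN => ?_⟩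
  simp_rw [← dist_eq_norm] at hgreedy ⊢
  refine (energy_le_of_row_le (B := C * (K * (N / H) ^ (s / δ))) hsymm fun k hk => ?_).trans_eq ?_
  · rcases k.eq_zero_or_pos with rfl | hk₀
    · exact (sum_range_zero _).trans_le (by positivity)
    obtain ⟨x, hxA, hx⟩ := hgood A H hH (ENNReal.ofReal_toReal hHtop).le (range k) a
      (nonempty_range_iff.2 hk₀.ne')
    refine (greedy_row_le_mul_sum_dist_rpow_neg hwC ha (hgreedy k) hxA).trans
      (mul_le_mul_of_nonneg_left (hx.trans ?_) hC)
    have hkN : (k : ℝ) ≤ N := by exact_mod_cast (mem_range.1 hk).le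
    rw [card_range]
    gcongr
    exact div_nonneg (hδ.trans hs).le hδ.le
  · rw [Real.div_rpow (by positivity) hH.le, Real.rpow_neg hH.le, Real.rpow_add (by positivity),
      Real.rpow_one]
    ring

/-- Order-of-growth bound for greedy `(w,s)`-energy sequences, `s > δ`: if `A ⊂ ℝ^P` is
compact with `H_δ(A) > 0` and `w` is a bounded lower semicontinuous symmetric CPD-type
weight with `w ≤ C` on `A × A`, then there is `M > 0` depending only on `s`, `δ`, `A`,
such that every greedy `(w,s)`-energy sequence on `A` satisfies
`E_s^w(α_N) ≤ M · C · H_δ^∞(A)^{-s/δ} · N^{1+s/δ}` for all `N ≥ 2`. -/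
theorem greedy_energy_growth {P : ℕ}
    (A : Set (EuclideanSpace ℝ (Fin P))) (hA : IsCompact A)
    (δ : ℝ) (hδ : 0 < δ) (hδP : δ ≤ P)
    (hHaus : 0 < (MeasureTheory.Measure.hausdorffMeasure δ :
      Measure (EuclideanSpace ℝ (Fin P))) A)
    (s : ℝ) (hs : δ < s) :
    ∃ M : ℝ, 0 < M ∧
      ∀ (w : EuclideanSpace ℝ (Fin P) → EuclideanSpace ℝ (Fin P) → ℝ)
        (_ : ∀ x y, 0 ≤ w x y) (_ : ∀ x y, w x y = w y x)
        (_ : LowerSemicontinuous fun p :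
          EuclideanSpace ℝ (Fin P) × EuclideanSpace ℝ (Fin P) => w p.1 p.2)
        (C : ℝ) (_ : 0 ≤ C) (_ : ∀ x ∈ A, ∀ y ∈ A, w x y ≤ C)
        (a : ℕ → EuclideanSpace ℝ (Fin P)) (_ : ∀ n, a n ∈ A)
        (_ : ∀ n, ∀ x ∈ A,
          ∑ i ∈ Finset.range n, w (a n) (a i) * ‖a n - a i‖ ^ (-s) ≤
            ∑ i ∈ Finset.range n, w x (a i) * ‖x - a i‖ ^ (-s))
        (N : ℕ) (_ : 2 ≤ N),
        ∑ i ∈ Finset.range N, ∑ j ∈ Finset.range N,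
            (if i = j then 0 else w (a i) (a j) * ‖a i - a j‖ ^ (-s)) ≤
          M * C * (hausdorffContent δ A).toReal ^ (-(s / δ)) * (N : ℝ) ^ (1 + s / δ) :=
  greedy_energy_growth_general A hA δ hδ hHaus s hs
end

section
/- lim_{n→∞} [ (1/9)·( (E₁ⁿ - (1/π)2^{2n} n log 2)/2^{2n} + 16·((1/2)E₁^{n+2} - (1/π)Λ_n)/2^{2(n+2)} ) ] = (1/π)(γ - log(π/2) + log(2^{16/9}/3)), where Λ_n = (3·2^n)² log(3·2^n) - 2^{2n} log(2^n), assuming (E₁^m - (1/π)2^{2m} log(2^m))/2^{2m} → (1/π)(γ - log(π/2)) as m → ∞. -/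
/-!
Writing `a m` for the normalized second-order error at `2^m` points, the expression equals
`(1/9) a n + (8/9) a (n+2) + (1/π) log (2^(16/9)/3)`: the constant collects the `log 3` from
`log (3·2^n)` and the mismatch between `Λ n` and `(1/2) 2^(2(n+2)) log 2^(n+2)`. Both errors
tend to the same limit, and the weights sum to one.
-/

open Filter Real

noncomputable def secondOrderError (E : ℕ → ℝ) (m : ℕ) : ℝ :=
  (E m - (1 / π) * 2 ^ (2 * m) * log (2 ^ m)) / 2 ^ (2 * m)

lemma log_two_rpow_div_three : log ((2 : ℝ) ^ ((16 : ℝ) / 9) / 3) = 16 / 9 * log 2 - log 3 := by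
  rw [log_div (by positivity) (by norm_num), log_rpow (by norm_num)]

lemma greedy_error_eq_combination (E : ℕ → ℝ) (n : ℕ) :
    (1 / 9) * ((E n - (1 / π) * 2 ^ (2 * n) * (n * log 2)) / 2 ^ (2 * n) +
        16 * ((1 / 2) * E (n + 2) -
            (1 / π) * (((3 * 2 ^ n : ℝ)) ^ 2 * log ((3 * 2 ^ n : ℝ)) -
              2 ^ (2 * n) * log (2 ^ n))) / 2 ^ (2 * (n + 2))) =
      1 / 9 * secondOrderError E n + 8 / 9 * secondOrderError E (n + 2) +
        1 / π * log ((2 : ℝ) ^ ((16 : ℝ) / 9) / 3) := by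
  have hpow : (2 : ℝ) ^ (2 * (n + 2)) = 2 ^ (2 * n) * 16 := by ring
  have hπ : π ≠ 0 := pi_ne_zero
  rw [log_two_rpow_div_three, log_mul (by norm_num) (by positivity)]
  simp only [secondOrderError, log_pow, hpow]
  field_simp
  push_cast
  ring

/-- Second-order energy asymptotics for greedy `k₁`-energy configurations of `3·2^n`
points on `S¹`: writing `E m` for the minimal Riesz 1-energy of `2^m` points on the
unit circle, and assuming the known asymptotics
`(E m - (1/π)·2^(2m)·log(2^m))/2^(2m) → (1/π)(γ - log(π/2))`, one has, with
`Λ n = (3·2^n)²·log(3·2^n) - 2^(2n)·log(2^n)`,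
`(1/9)·((E n - (1/π)·2^(2n)·n·log 2)/2^(2n) + 16·((1/2)·E (n+2) - (1/π)·Λ n)/2^(2(n+2)))`
converging to `(1/π)(γ - log(π/2) + log(2^(16/9)/3))`. -/
theorem greedy_second_order_asymptotics (E : ℕ → ℝ)
    (hE : Tendsto (fun m : ℕ =>
        (E m - (1 / Real.pi) * 2 ^ (2 * m) * Real.log (2 ^ m)) / 2 ^ (2 * m))
      atTop (nhds ((1 / Real.pi) * (Real.eulerMascheroniConstant - Real.log (Real.pi / 2))))) :
    Tendsto (fun n : ℕ =>
        (1 / 9) * ((E n - (1 / Real.pi) * 2 ^ (2 * n) * (n * Real.log 2)) / 2 ^ (2 * n) +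
          16 * ((1 / 2) * E (n + 2) -
              (1 / Real.pi) * (((3 * 2 ^ n : ℝ)) ^ 2 * Real.log ((3 * 2 ^ n : ℝ)) -
                2 ^ (2 * n) * Real.log (2 ^ n))) / 2 ^ (2 * (n + 2))))
      atTop
      (nhds ((1 / Real.pi) * (Real.eulerMascheroniConstant - Real.log (Real.pi / 2) +
        Real.log ((2 : ℝ) ^ ((16 : ℝ) / 9) / 3)))) := by
  set L := (1 / π) * (eulerMascheroniConstant - log (π / 2))
  have hE : Tendsto (secondOrderError E) atTop (nhds L) := hE
  have hshift : Tendsto (fun n => secondOrderError E (n + 2)) atTop (nhds L) :=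
    hE.comp (tendsto_add_atTop_nat 2)
  have hlim := ((hE.const_mul (1 / 9)).add (hshift.const_mul (8 / 9))).add_const
    (1 / π * log ((2 : ℝ) ^ ((16 : ℝ) / 9) / 3))
  simp only [← greedy_error_eq_combination] at hlim
  convert hlim using 2
  ring
end
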